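/- arXiv:0711.3057 — 8 statements merged into one kernel-verified Lean document; each statement's English description precedes it below -/
import Mathlib

section
/- Let k ≥ 2 be an even integer. In the symmetric group on {1, 2, …, 2k−1}, the two k-cycles σ = (1 2 … k) and τ = (k k+1 … 2k−1) generate the full symmetric group, i.e. the subgroup generated by {σ, τ} equals S_{2k−1}. -/
/-!
Write `σ = (a₀ … a_{k-1})` and `τ = (a_{k-1} … a_{2k-2})`; they share only the point `a_{k-1}`.
Their product `στ` is the full cycle `ρ = (a₀ … a_{2k-2})`, and the commutator `⁅τ, σ⁻¹⁆` is the
3-cycle `(a_{k-2} a_{k-1} a_k) = (x, ρ x, ρ² x)` for `x = a_{k-2}`; conjugating it by powers of `ρ`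
gives every 3-cycle of this shape. Since `(a₀ … a_{k-1}) = (a₀ a₁ a₂)(a₂ … a_{k-1})`, peeling such
3-cycles off `σ` shortens it by two points at a time, and because `k` is even this ends at the
transposition `(a_{k-2} a_{k-1})` of two `ρ`-adjacent points. A full cycle together with such a
transposition generates the whole symmetric group.
-/

open Equiv
open scoped commutatorElement

namespace List

theorem exists_drop_eq_cons_cons_cons {α : Type*} {l : List α} {n : ℕ} (h : n + 3 ≤ l.length) :
    ∃ a p b t, l.drop n = a :: p :: b :: t := by
  match hd : l.drop n with
  | a :: p :: b :: t => exact ⟨a, p, b, t, rfl⟩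
  | [] | [_] | [_, _] => have := congrArg length hd; simp at this; omega

variable {α : Type*} [DecidableEq α]

theorem formPerm_append_singleton_mul (p : α) (t : List α) :
    ∀ s : List α, formPerm (s ++ [p]) * formPerm (p :: t) = formPerm (s ++ p :: t)
  | [] => by simp
  | [_] => rfl
  | x :: y :: s => by
    simpa [mul_assoc] using formPerm_append_singleton_mul p t (y :: s)

theorem formPerm_map (f : Equiv.Perm α) :
    ∀ l : List α, formPerm (l.map f) = f * formPerm l * f⁻¹
  | [] => by simp
  | [x] => by simp
  | x :: y :: l => by
    rw [map_cons, map_cons, formPerm_cons_cons, ← map_cons, formPerm_map f (y :: l),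
      swap_apply_apply, formPerm_cons_cons]
    group

theorem formPerm_apply_of_infix {l : List α} {a b : α} (hl : l.Nodup) (h : [a, b] <:+: l) :
    formPerm l a = b := by
  obtain ⟨s, t, rfl⟩ := h
  simpa using formPerm_apply_lt_getElem _ hl s.length (by simp)

theorem formPerm_apply_apply_of_infix {l : List α} {x y z : α} (hl : l.Nodup)
    (h : [x, y, z] <:+: l) : formPerm l x = y ∧ formPerm l y = z :=
  ⟨formPerm_apply_of_infix hl ((prefix_append [x, y] [z]).isInfix.trans h),
    formPerm_apply_of_infix hl ((suffix_append [x] [y, z]).isInfix.trans h)⟩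

theorem support_formPerm_eq_univ [Fintype α] {l : List α} (hl : l.Nodup)
    (hall : ∀ x, x ∈ l) (h2 : 2 ≤ l.length) : (formPerm l).support = Finset.univ := by
  rw [support_formPerm_of_nodup _ hl fun x hx => by simp [hx] at h2]
  ext x; simp [hall]

theorem commutator_formPerm_cons_formPerm_append_inv {s t : List α} {a p b : α}
    (hl : (s ++ a :: p :: b :: t).Nodup) :
    ⁅formPerm (p :: b :: t), (formPerm (s ++ [a, p]))⁻¹⁆ = formPerm [a, p, b] := by
  have hapb : [a, p, b].Nodup := hl.sublist (by simp)
  set σ := formPerm (s ++ [a, p])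
  rw [show s ++ a :: p :: b :: t = s ++ [a, p] ++ b :: t by simp, nodup_append] at hl
  have hσa : σ a = p := formPerm_apply_of_infix hl.1 ⟨s, [], by simp⟩
  have hfix : ∀ x ∈ b :: t, σ⁻¹ x = x := fun x hx =>
    Perm.inv_eq_iff_eq.mpr (formPerm_apply_of_notMem fun hx' => hl.2.2 x hx' x hx rfl).symm
  have hconj : σ⁻¹ * formPerm (p :: b :: t) * σ = formPerm (a :: b :: t) := by
    rw [← inv_inv σ, inv_inv σ⁻¹, ← formPerm_map, map_cons, map_congr_left hfix, map_id',
      Perm.inv_eq_iff_eq.mpr hσa.symm]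
  calc ⁅formPerm (p :: b :: t), σ⁻¹⁆
      = formPerm (p :: b :: t) * (σ⁻¹ * formPerm (p :: b :: t) * σ)⁻¹ := by
        rw [commutatorElement_def]; group
    _ = Equiv.swap p b * Equiv.swap a b := by
        rw [hconj]
        simp only [formPerm_cons_cons, mul_inv_rev, swap_inv, mul_assoc, mul_inv_cancel_left]
    _ = formPerm [a, p, b] := by
        simp only [nodup_cons, mem_cons, not_mem_nil] at hapb
        ext x
        simp only [formPerm_cons_cons, formPerm_singleton, mul_one, Perm.mul_apply,
          swap_apply_def]
        split_ifs <;> grind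

theorem swap_mem_of_formPerm_append_pair_mem {H : Subgroup (Equiv.Perm α)} {x y : α} :
    ∀ {s : List α}, Even s.length →
      (∀ a b c, [a, b, c] <:+: s ++ [x, y] → formPerm [a, b, c] ∈ H) →
      formPerm (s ++ [x, y]) ∈ H → Equiv.swap x y ∈ H
  | [], _, _, h => h
  | [_], hs, _, _ => by simp at hs
  | a :: b :: s, hs, hthree, h => by
    obtain ⟨c, r, hcr⟩ : ∃ c r, s ++ [x, y] = c :: r := by cases s <;> simp
    have hsplit :
        formPerm (a :: b :: (s ++ [x, y])) = formPerm [a, b, c] * formPerm (s ++ [x, y]) := by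
      rw [hcr]; exact (formPerm_append_singleton_mul c r [a, b]).symm
    refine swap_mem_of_formPerm_append_pair_mem (s := s) (by simpa [parity_simps] using hs)
      (fun a' b' c' h' => hthree a' b' c' (h'.trans ?_)) ?_
    · exact (suffix_cons _ _).isInfix.trans (suffix_cons _ _).isInfix
    · have habc : formPerm [a, b, c] ∈ H :=
        hthree a b c (by rw [cons_append, cons_append, hcr]; exact (prefix_append _ r).isInfix)
      exact (H.mul_mem_cancel_left habc).mp (hsplit ▸ h)

end List

namespace Equiv.Perm

variable {α : Type*} [DecidableEq α]

theorem IsCycle.formPerm_triple_mem {H : Subgroup (Perm α)} {ρ : Perm α} (hρ : ρ.IsCycle)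
    (hρH : ρ ∈ H) {a x : α} (ha : ρ a ≠ a) (hx : ρ x ≠ x)
    (h : List.formPerm [a, ρ a, ρ (ρ a)] ∈ H) : List.formPerm [x, ρ x, ρ (ρ x)] ∈ H := by
  obtain ⟨m, rfl⟩ := hρ.sameCycle ha hx
  have hcomm : ∀ y, ρ ((ρ ^ m) y) = (ρ ^ m) (ρ y) := fun y =>
    congrArg (· y) (Commute.self_zpow ρ m).eq
  have hmap :
      [(ρ ^ m) a, ρ ((ρ ^ m) a), ρ (ρ ((ρ ^ m) a))] = [a, ρ a, ρ (ρ a)].map (ρ ^ m) := by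
    simp [hcomm]
  rw [hmap, List.formPerm_map]
  exact H.mul_mem (H.mul_mem (H.zpow_mem hρH m) h) (H.inv_mem (H.zpow_mem hρH m))

end Equiv.Perm

open Equiv.Perm in
theorem closure_formPerm_overlap_eq_top {α : Type*} [DecidableEq α] [Fintype α]
    {s t : List α} {a p b : α} (hl : (s ++ a :: p :: b :: t).Nodup)
    (hall : ∀ x, x ∈ s ++ a :: p :: b :: t) (hs : Even s.length) :
    Subgroup.closure {(s ++ [a, p]).formPerm, (p :: b :: t).formPerm} = ⊤ := by
  set l := s ++ a :: p :: b :: t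
  set H := Subgroup.closure {(s ++ [a, p]).formPerm, (p :: b :: t).formPerm}
  set ρ := l.formPerm
  have hσH : (s ++ [a, p]).formPerm ∈ H := Subgroup.subset_closure (by simp)
  have hτH : (p :: b :: t).formPerm ∈ H := Subgroup.subset_closure (by simp)
  have hlen : 2 ≤ l.length := by simp [l]; omega
  have hρ : ρ.IsCycle := List.isCycle_formPerm hl hlen
  have hsupp : ρ.support = Finset.univ := List.support_formPerm_eq_univ hl hall hlen
  have hmoved : ∀ x, ρ x ≠ x := fun x => mem_support.mp (hsupp ▸ Finset.mem_univ x)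
  have hρH : ρ ∈ H := by
    have hρ_eq : (s ++ [a, p]).formPerm * (p :: b :: t).formPerm = ρ := by
      simpa using List.formPerm_append_singleton_mul p (b :: t) (s ++ [a])
    exact hρ_eq ▸ H.mul_mem hσH hτH
  have hρa : ρ a = p := List.formPerm_apply_of_infix hl ⟨s, b :: t, by simp [l]⟩
  have hρp : ρ p = b := List.formPerm_apply_of_infix hl ⟨s ++ [a], t, by simp [l]⟩
  have hthree : ∀ x, [x, ρ x, ρ (ρ x)].formPerm ∈ H := by
    refine fun x => hρ.formPerm_triple_mem hρH (hmoved a) (hmoved x) ?_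
    rw [hρa, hρp, ← List.commutator_formPerm_cons_formPerm_append_inv hl, commutatorElement_def]
    exact H.mul_mem (H.mul_mem (H.mul_mem hτH (H.inv_mem hσH)) (H.inv_mem hτH))
      (H.inv_mem (H.inv_mem hσH))
  have hswap : Equiv.swap a p ∈ H := by
    refine List.swap_mem_of_formPerm_append_pair_mem hs (fun x y z hxyz => ?_) hσH
    obtain ⟨rfl, rfl⟩ :=
      List.formPerm_apply_apply_of_infix hl (hxyz.trans ⟨[], b :: t, by simp [l]⟩)
    exact hthree x
  rw [eq_top_iff, ← closure_cycle_adjacent_swap hρ hsupp a, hρa, Subgroup.closure_le]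
  rintro g (rfl | rfl)
  exacts [hρH, hswap]

/-- For even `k ≥ 2`, the two `k`-cycles `σ = (1 2 … k)` and
`τ = (k k+1 … 2k−1)` generate the full symmetric group `S_{2k−1}`.
Here we work with `Equiv.Perm (Fin (2*k-1))` (0-indexed, so `σ` is the cycle on
indices `0,…,k-1` and `τ` the cycle on indices `k-1,…,2k-2`). -/
theorem stmt_0 (k : ℕ) (hk : 2 ≤ k) (hkeven : Even k)
    (σ τ : Equiv.Perm (Fin (2 * k - 1)))
    (hσ : σ = ((List.finRange (2 * k - 1)).take k).formPerm)
    (hτ : τ = ((List.finRange (2 * k - 1)).drop (k - 1)).formPerm) :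
    Subgroup.closure {σ, τ} = (⊤ : Subgroup (Equiv.Perm (Fin (2 * k - 1)))) := by
  set s := (List.finRange (2 * k - 1)).take (k - 2)
  have hs : s.length = k - 2 := by simp [s]; omega
  obtain ⟨a, p, b, t, hdrop⟩ :=
    (List.finRange (2 * k - 1)).exists_drop_eq_cons_cons_cons (n := k - 2) (by simp; omega)
  have hl : List.finRange (2 * k - 1) = s ++ a :: p :: b :: t := by
    rw [← hdrop, List.take_append_drop]
  rw [hl] at hσ hτ
  have hσ' : σ = (s ++ [a, p]).formPerm := by
    rw [hσ, List.take_append, hs, show k - (k - 2) = 2 by omega,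
      List.take_of_length_le (by omega)]
    rfl
  have hτ' : τ = (p :: b :: t).formPerm := by
    rw [hτ, List.drop_append, hs, show k - 1 - (k - 2) = 1 by omega,
      List.drop_eq_nil_of_le (by omega)]
    rfl
  rw [hσ', hτ']
  obtain ⟨c, rfl⟩ := hkeven
  exact closure_formPerm_overlap_eq_top (hl ▸ List.nodup_finRange _) (hl ▸ List.mem_finRange)
    ⟨c - 1, by omega⟩
end

section
/- Let k ≥ 2 be an integer (not necessarily even), and in S_{2k−1} let σ = (1 2 … k) and τ = (k k+1 … 2k−1). Then for every bijection f from {1, 2, …, k} to {k, k+1, …, 2k−1} there exists a permutation ρ in the subgroup generated by {σ, τ} such that ρ(x) = f(x) for every x ∈ {1, 2, …, k}. -/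
/-!
Index from `0`, so `n = 2k - 1`, `σ` is the cycle `(0 … k-1)` and `τ` the cycle `(k-1 … n-1)`.
Then `σ τ` is the translation `x ↦ x + 1` of `Fin n`, and with `d = k - 1` the commutator `⁅σ, τ⁆`
is the 3-cycle `(0 d)(0 -d)`. Its conjugates under translations are the products `E x E (x - d)` of
the transpositions `E x = (x, x + d)`; since `2d + 1 = n`, `d` generates `Fin n`, so telescoping
gives every product `E x E y`. The `E x` generate the symmetric group, hence their pairwise
products generate the alternating group, which is therefore contained in `⟨σ, τ⟩`.
To realise `f`, extend it to any permutation and fix the parity: for `k` even `σ` is odd, so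
`⟨σ, τ⟩` is everything; for `k` odd (so `k ≥ 3`) compose with the transposition `(k, k+1)`,
which does not move the points `0, …, k-1`.
-/

open Equiv Equiv.Perm Subgroup
open scoped Pointwise commutatorElement

theorem Equivalence.rel_of_zmultiples_eq_top {A : Type*} [AddCommGroup A] {d : A}
    (hd : AddSubgroup.zmultiples d = ⊤) {r : A → A → Prop} (hr : Equivalence r)
    (hstep : ∀ x, r x (x + d)) (x y : A) : r x y := by
  let T : AddSubgroup A :=
    { carrier := {a | ∀ x, r x (x + a)}
      zero_mem' := fun x => by simpa using hr.refl x
      add_mem' := fun ha hb x => hr.trans (ha x) (by simpa [add_assoc] using hb (x + _))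
      neg_mem' := fun {a} ha x => hr.symm (by simpa [← sub_eq_add_neg] using ha (x - a)) }
  have hT : AddSubgroup.zmultiples d ≤ T := AddSubgroup.zmultiples_le.2 hstep
  have h : r x (x + (y - x)) := hT (hd ▸ AddSubgroup.mem_top (y - x)) x
  rwa [add_sub_cancel] at h

namespace Equiv.Perm

variable {α : Type*} [Fintype α] [DecidableEq α]

theorem alternatingGroup_le_closure_mul_self {S : Set (Perm α)} (hS : ∀ s ∈ S, s.IsSwap)
    (htop : closure S = ⊤) : alternatingGroup α ≤ closure (S * S) := by
  set H := closure (S * S)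
  have hSS : ∀ s ∈ S, s * s = 1 := by
    rintro _ hs
    obtain ⟨a, b, -, rfl⟩ := hS _ hs
    exact swap_mul_self a b
  intro g hg
  have hgS : g ∈ closure S := htop ▸ mem_top g
  rcases S.eq_empty_or_nonempty with hS₀ | ⟨s₀, hs₀⟩
  · rw [hS₀, Subgroup.closure_empty, mem_bot] at hgS
    exact hgS ▸ H.one_mem
  -- `H` has index at most two in `closure S`, with `s₀` representing the other coset.
  have step : ∀ x, ∀ s ∈ S, x ∈ H ∨ x * s₀ ∈ H → x * s ∈ H ∨ x * s * s₀ ∈ H := by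
    rintro x s hs (hx | hx)
    · have := H.mul_mem hx (subset_closure (Set.mul_mem_mul hs hs₀))
      exact Or.inr (by rwa [← mul_assoc] at this)
    · refine Or.inl ?_
      have := H.mul_mem hx (subset_closure (Set.mul_mem_mul hs₀ hs))
      rwa [mul_assoc, ← mul_assoc s₀, hSS s₀ hs₀, one_mul] at this
  have hcoset : g ∈ H ∨ g * s₀ ∈ H := by
    clear hg
    induction hgS using closure_induction_right with
    | one => exact Or.inl H.one_mem
    | mul_right x _ s hs ih => exact step x s hs ih
    | mul_inv_cancel x _ s hs ih =>
      rw [inv_eq_of_mul_eq_one_right (hSS s hs)]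
      exact step x s hs ih
  refine hcoset.resolve_right fun h => ?_
  have hH : H ≤ alternatingGroup α := by
    rw [closure_le]
    rintro _ ⟨s, hs, t, ht, rfl⟩
    exact mul_mem_alternatingGroup_of_isSwap (hS s hs) (hS t ht)
  have := hH h
  rw [mem_alternatingGroup, map_mul, mem_alternatingGroup.1 hg, (hS s₀ hs₀).sign_eq] at this
  exact absurd this (by decide)

variable {A : Type*} [AddCommGroup A] [DecidableEq A] {d : A}

theorem isSwap_swap_add (hd₀ : d ≠ 0) (x : A) : (swap x (x + d)).IsSwap :=
  ⟨x, x + d, by simpa using hd₀, rfl⟩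

theorem closure_range_swap_add_eq_top [Finite A] (hd : AddSubgroup.zmultiples d = ⊤)
    (hd₀ : d ≠ 0) :
    closure (Set.range fun x : A => swap x (x + d)) = ⊤ := by
  have : MulAction.IsPretransitive (closure (Set.range fun x : A => swap x (x + d))) A := by
    refine ⟨fun x y => MulAction.mem_orbit_iff.1 ?_⟩
    refine (MulAction.orbitRel _ A).iseqv.rel_of_zmultiples_eq_top hd (fun z => ?_) y x
    exact ⟨⟨swap z (z + d), subset_closure ⟨z, rfl⟩⟩, swap_apply_right z (z + d)⟩
  exact closure_of_isSwap_of_isPretransitive (by rintro _ ⟨x, rfl⟩; exact isSwap_swap_add hd₀ x)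

theorem alternatingGroup_le_of_addRight_mem [Fintype A] {G : Subgroup (Perm A)} {c : A}
    (hc : AddSubgroup.zmultiples c = ⊤) (hcG : Equiv.addRight c ∈ G)
    (hd : AddSubgroup.zmultiples d = ⊤) (hd₀ : d ≠ 0)
    (hd₃ : swap 0 d * swap 0 (-d) ∈ G) : alternatingGroup A ≤ G := by
  have hG : ∀ a, Equiv.addRight a ∈ G := fun a => by
    obtain ⟨m, rfl⟩ := AddSubgroup.mem_zmultiples_iff.1 (hc ▸ AddSubgroup.mem_top a)
    rw [← zsmul_addRight]
    exact G.zpow_mem hcG m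
  set E : A → Perm A := fun x => swap x (x + d)
  have hconj₁ : ∀ a x, Equiv.addRight a * E x * (Equiv.addRight a)⁻¹ = E (x + a) := by
    intro a x
    rw [← swap_apply_apply]
    simp [E, add_right_comm]
  have hconj : ∀ a x y,
      Equiv.addRight a * (E x * E y) * (Equiv.addRight a)⁻¹ = E (x + a) * E (y + a) := by
    intro a x y
    rw [← hconj₁, ← hconj₁]
    group
  have hpair : ∀ x y, E x * E y ∈ G := by
    refine Equivalence.rel_of_zmultiples_eq_top (d := -d) (by rwa [AddSubgroup.zmultiples_neg])
      ⟨fun x => by simp [E], fun h => by simpa [E] using G.inv_mem h, fun h h' => ?_⟩ fun x => ?_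
    · simpa [mul_assoc, E] using G.mul_mem h h'
    · have h₀ : E 0 * E (-d) ∈ G := by simpa [E, swap_comm (-d)] using hd₃
      have := G.mul_mem (G.mul_mem (hG x) h₀) (G.inv_mem (hG x))
      rwa [hconj, zero_add, add_comm] at this
  calc alternatingGroup A
      ≤ closure (Set.range E * Set.range E) := alternatingGroup_le_closure_mul_self
        (by rintro _ ⟨x, rfl⟩; exact isSwap_swap_add hd₀ x) (closure_range_swap_add_eq_top hd hd₀)
    _ ≤ G := by
        rw [closure_le]
        rintro _ ⟨_, ⟨x, rfl⟩, _, ⟨y, rfl⟩, rfl⟩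
        exact hpair x y

theorem eq_top_of_alternatingGroup_le {G : Subgroup (Perm α)} (hA : alternatingGroup α ≤ G)
    {g : Perm α} (hg : g ∈ G) (hg₁ : sign g = -1) : G = ⊤ := by
  refine eq_top_iff.2 fun ρ _ => ?_
  rcases Int.units_eq_one_or (sign ρ) with hρ | hρ
  · exact hA hρ
  · have : ρ * g⁻¹ ∈ alternatingGroup α := by simp [mem_alternatingGroup, hρ, hg₁]
    simpa using G.mul_mem (hA this) hg

theorem exists_mem_alternatingGroup_apply_eq (ρ : Perm α) {a b : α} (hab : a ≠ b) :
    ∃ π ∈ alternatingGroup α, ∀ x, x ≠ a → x ≠ b → π x = ρ x := by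
  rcases Int.units_eq_one_or (sign ρ) with hρ | hρ
  · exact ⟨ρ, hρ, fun _ _ _ => rfl⟩
  · refine ⟨ρ * swap a b, by simp [mem_alternatingGroup, hρ, hab], fun x hxa hxb => ?_⟩
    rw [Perm.mul_apply, swap_apply_of_ne_of_ne hxa hxb]

end Equiv.Perm

theorem List.formPerm_take_drop_finRange {n i j : ℕ} (hij : i ≤ j) (hj : j < n) :
    (((List.finRange n).drop i).take (j + 1 - i)).formPerm =
      Fin.cycleIcc ⟨i, by omega⟩ ⟨j, hj⟩ := by
  have : NeZero n := ⟨by omega⟩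
  set l := ((List.finRange n).drop i).take (j + 1 - i)
  have hlen : l.length = j + 1 - i := by
    simp only [l, length_take, length_drop, length_finRange]; omega
  have hget : ∀ m (hm : m < l.length), l[m] = ⟨i + m, by omega⟩ := by
    intro m hm
    simp [l]
  have hnodup : l.Nodup :=
    ((List.nodup_finRange n).sublist (List.drop_sublist _ _)).sublist (List.take_sublist _ _)
  ext x
  by_cases hx : i ≤ x.val ∧ x.val ≤ j
  · have hx' : x = l[x.val - i]'(by omega) := by ext; simp only [hget]; omega
    rw [Fin.cycleIcc_of_le_of_le (Fin.le_def.2 hx.1) (Fin.le_def.2 hx.2)]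
    conv_lhs => rw [hx', List.formPerm_apply_getElem _ hnodup, hget]
    split_ifs with h
    · simp [h, hlen, show j - i + 1 = j + 1 - i by omega]
    · have hxj : x.val < j := lt_of_le_of_ne hx.2 (fun h' => h (Fin.ext h'))
      rw [Fin.val_add_one_of_lt' (i := x) (by omega)]
      simp only [hlen, Nat.mod_eq_of_lt (show x.val - i + 1 < j + 1 - i by omega)]
      omega
  · have hxl : x ∉ l := by
      rw [List.mem_iff_getElem]
      rintro ⟨m, hm, rfl⟩
      simp only [hget] at hx
      omega
    rw [List.formPerm_apply_of_notMem hxl]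
    rcases not_and_or.1 hx with hx | hx
    · rw [Fin.cycleIcc_of_lt (show x < ⟨i, _⟩ from Fin.lt_def.2 (show x.val < i by omega))]
    · rw [Fin.cycleIcc_of_gt (show ⟨j, hj⟩ < x from Fin.lt_def.2 (show j < x.val by omega))]

theorem Fin.val_cycleIcc {n : ℕ} [NeZero n] {i j : Fin n} (x : Fin n) :
    (cycleIcc i j x : ℕ) =
      if x < i ∨ j < x then (x : ℕ) else if x = j then (i : ℕ) else (x : ℕ) + 1 := by
  rcases lt_or_ge x i with hxi | hxi
  · simp [cycleIcc_of_lt hxi, hxi]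
  rcases lt_or_ge j x with hjx | hjx
  · simp [cycleIcc_of_gt hjx, hjx]
  rw [cycleIcc_of_le_of_le hxi hjx, if_neg (not_or.2 ⟨not_lt.2 hxi, not_lt.2 hjx⟩)]
  split_ifs with h
  · rfl
  · have := j.isLt
    rw [val_add_one_of_lt' (by fin_omega)]

theorem Fin.cycleIcc_zero_eq_addRight_one {n : ℕ} [NeZero n] :
    cycleIcc 0 ⟨n - 1, Nat.sub_one_lt (NeZero.ne n)⟩ = Equiv.addRight (1 : Fin n) := by
  refine Equiv.ext fun x => ?_
  rw [coe_addRight]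
  rcases (le_def.2 (Nat.le_sub_one_of_lt x.isLt) :
    x ≤ ⟨n - 1, Nat.sub_one_lt (NeZero.ne n)⟩).eq_or_lt with h | h
  · rw [h, cycleIcc_of_last (zero_le _), Fin.ext_iff, val_add, val_one', Nat.add_mod_mod,
      Nat.sub_add_cancel NeZero.one_le, Nat.mod_self, val_zero]
  · exact cycleIcc_of_ge_of_lt (zero_le x) h

theorem Fin.cycleIcc_mul_cycleIcc_last {n : ℕ} [NeZero n] {j : Fin n} :
    cycleIcc 0 j * cycleIcc j ⟨n - 1, Nat.sub_one_lt (NeZero.ne n)⟩ = Equiv.addRight 1 := by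
  rw [← cycleIcc_zero_eq_addRight_one]
  exact DFunLike.coe_injective
    (cycleIcc.trans (zero_le j) (le_def.2 (Nat.le_sub_one_of_lt j.isLt)))

theorem Fin.commutatorElement_cycleIcc {n : ℕ} [NeZero n] {j : Fin n} (hj₀ : j ≠ 0)
    (hj : (j : ℕ) + 1 < n) :
    ⁅cycleIcc 0 j, cycleIcc j ⟨n - 1, Nat.sub_one_lt (NeZero.ne n)⟩⁆ =
      swap 0 j * swap 0 (j + 1) := by
  rw [commutatorElement_def, mul_inv_eq_iff_eq_mul, mul_inv_eq_iff_eq_mul,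
    cycleIcc_mul_cycleIcc_last]
  have hj1 : ((j + 1 : Fin n) : ℕ) = j + 1 := val_add_one_of_lt' hj
  have hj₀' : (j : ℕ) ≠ 0 := fun h => hj₀ (Fin.ext h)
  -- A finite case check: compare values along `x ↦ σ x ↦ τ (σ x) ↦ …` as natural numbers.
  refine Equiv.ext fun x => Fin.ext ?_
  have hx1 : ((x + 1 : Fin n) : ℕ) = if (x : ℕ) + 1 = n then 0 else (x : ℕ) + 1 := by
    split_ifs with h
    · rw [val_add, val_one', Nat.add_mod_mod, h, Nat.mod_self]
    · exact val_add_one_of_lt' (by omega)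
  simp only [Perm.mul_apply, coe_addRight, hx1]
  generalize hy : cycleIcc 0 j x = y
  generalize hz : cycleIcc j ⟨n - 1, _⟩ y = z
  generalize hw : swap 0 (j + 1) z = w
  have h₁ := val_cycleIcc (i := 0) (j := j) x
  have h₂ := val_cycleIcc (i := j) (j := ⟨n - 1, Nat.sub_one_lt (NeZero.ne n)⟩) y
  have h₃ := congrArg Fin.val (swap_apply_def 0 (j + 1) z)
  have h₄ := congrArg Fin.val (swap_apply_def 0 j w)
  rw [hy] at h₁
  rw [hz] at h₂
  rw [hw] at h₃
  simp only [apply_ite Fin.val, Fin.ext_iff, Fin.lt_def, Fin.coe_ofNat_eq_mod, Nat.zero_mod,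
    hj1] at h₁ h₂ h₃ h₄
  split_ifs at h₁ h₂ h₃ h₄ ⊢ <;> omega

theorem List.formPerm_take_finRange {n k : ℕ} [NeZero n] (hk : 0 < k) (hkn : k ≤ n) :
    ((List.finRange n).take k).formPerm = Fin.cycleIcc 0 ⟨k - 1, by omega⟩ := by
  have := formPerm_take_drop_finRange (Nat.zero_le (k - 1)) (by omega : k - 1 < n)
  rwa [drop_zero, show k - 1 + 1 - 0 = k by omega] at this

theorem List.formPerm_drop_finRange {n j : ℕ} (hj : j < n) :
    ((List.finRange n).drop j).formPerm = Fin.cycleIcc ⟨j, hj⟩ ⟨n - 1, by omega⟩ := by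
  rw [← formPerm_take_drop_finRange (by omega) (by omega),
    take_of_length_le (by rw [length_drop, length_finRange]; omega)]

open Fin.CommRing in
theorem Fin.zmultiples_one_eq_top {n : ℕ} [NeZero n] : AddSubgroup.zmultiples (1 : Fin n) = ⊤ :=
  eq_top_iff.2 fun a _ => by
    simpa using AddSubgroup.intCast_mem_zmultiples_one (R := Fin n) (a.val : ℤ)

theorem Fin.alternatingGroup_le_closure_cycleIcc {n : ℕ} [NeZero n] {j : Fin n} (hj₀ : j ≠ 0)
    (hn : 2 * (j : ℕ) + 1 = n) :
    alternatingGroup (Fin n) ≤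
      closure {cycleIcc 0 j, cycleIcc j ⟨n - 1, Nat.sub_one_lt (NeZero.ne n)⟩} := by
  set G := closure {cycleIcc 0 j, cycleIcc j ⟨n - 1, Nat.sub_one_lt (NeZero.ne n)⟩}
  have hσ : cycleIcc 0 j ∈ G := subset_closure (Set.mem_insert _ _)
  have hτ : cycleIcc j ⟨n - 1, _⟩ ∈ G := subset_closure (Set.mem_insert_of_mem _ rfl)
  have hj₀' : (j : ℕ) ≠ 0 := fun h => hj₀ (Fin.ext h)
  have hneg : -j = j + 1 := by
    rw [Fin.ext_iff, Fin.val_neg', val_add_one_of_lt' (by omega), Nat.mod_eq_of_lt (by omega)]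
    omega
  have hgen : AddSubgroup.zmultiples j = ⊤ := by
    refine eq_top_iff.2 (le_trans (eq_top_iff.1 zmultiples_one_eq_top) ?_)
    rw [AddSubgroup.zmultiples_le, show (1 : Fin n) = -j - j by rw [hneg]; abel]
    exact sub_mem (neg_mem (AddSubgroup.mem_zmultiples j)) (AddSubgroup.mem_zmultiples j)
  refine alternatingGroup_le_of_addRight_mem zmultiples_one_eq_top ?_ hgen hj₀ ?_
  · rw [← cycleIcc_mul_cycleIcc_last]
    exact mul_mem hσ hτ
  · rw [hneg, ← commutatorElement_cycleIcc hj₀ (by omega), commutatorElement_def]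
    exact mul_mem (mul_mem (mul_mem hσ hτ) (inv_mem hσ)) (inv_mem hτ)

/-- For `k ≥ 2` (not necessarily even), with `σ = (1 2 … k)` and
`τ = (k k+1 … 2k−1)` in `S_{2k−1}` (0-indexed here: `σ` is the cycle on indices
`0,…,k-1` and `τ` the cycle on indices `k-1,…,2k-2`), for every bijection `f`
from the first `k` points to the last `k` points there is `ρ ∈ ⟨σ, τ⟩` agreeing
with `f` on each of the first `k` points. -/
theorem stmt_1 (k : ℕ) (hk : 2 ≤ k)
    (σ τ : Equiv.Perm (Fin (2 * k - 1)))
    (hσ : σ = ((List.finRange (2 * k - 1)).take k).formPerm)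
    (hτ : τ = ((List.finRange (2 * k - 1)).drop (k - 1)).formPerm)
    (f : {x : Fin (2 * k - 1) // x.val < k} ≃ {x : Fin (2 * k - 1) // k - 1 ≤ x.val}) :
    ∃ ρ ∈ Subgroup.closure {σ, τ},
      ∀ (x : Fin (2 * k - 1)) (hx : x.val < k), ρ x = (f ⟨x, hx⟩ : Fin (2 * k - 1)) := by
  have : NeZero (2 * k - 1) := ⟨by omega⟩
  rw [List.formPerm_take_finRange (by omega) (by omega)] at hσ
  rw [List.formPerm_drop_finRange (by omega)] at hτ
  have hA : alternatingGroup _ ≤ closure {σ, τ} := by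
    rw [hσ, hτ]
    exact Fin.alternatingGroup_le_closure_cycleIcc
      (Fin.ne_of_val_ne (show k - 1 ≠ 0 by omega)) (show 2 * (k - 1) + 1 = 2 * k - 1 by omega)
  suffices ∃ ρ ∈ closure {σ, τ}, ∀ x : Fin (2 * k - 1), x.val < k → ρ x = f.extendSubtype x from
    let ⟨ρ, hρ, hρf⟩ := this
    ⟨ρ, hρ, fun x hx => (hρf x hx).trans (f.extendSubtype_apply_of_mem x hx)⟩
  rcases Nat.even_or_odd k with hk' | hk'
  · have hσ₁ : sign σ = -1 := by
      rw [hσ, Fin.sign_cycleIcc_of_le (Fin.zero_le _), Fin.val_zero, Fin.val_mk, Nat.sub_zero]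
      exact Odd.neg_one_pow (by obtain ⟨m, rfl⟩ := hk'; exact ⟨m - 1, by omega⟩)
    refine ⟨f.extendSubtype, ?_, fun _ _ => rfl⟩
    rw [eq_top_of_alternatingGroup_le hA (subset_closure (Set.mem_insert σ {τ})) hσ₁]
    exact mem_top _
  · have hk₃ : 3 ≤ k := by obtain ⟨m, rfl⟩ := hk'; omega
    obtain ⟨π, hπ, hπρ⟩ := exists_mem_alternatingGroup_apply_eq f.extendSubtype
      (a := ⟨k, by omega⟩) (b := ⟨k + 1, by omega⟩) (by simp)
    exact ⟨π, hA hπ, fun x hx =>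
      hπρ x (Fin.ne_of_val_ne (show x.val ≠ k by omega))
        (Fin.ne_of_val_ne (show x.val ≠ k + 1 by omega))⟩
end

section
/- Let k ≥ 2 be even, and in S_{2k−1} let σ = (1 2 … k) and τ = (k k+1 … 2k−1). Then every permutation of {1, …, 2k−1} that fixes each of the points k+1, k+2, …, 2k−1 lies in the subgroup generated by {σ, τ}; that is, ⟨σ, τ⟩ contains the subsymmetric group on {1, 2, …, k}. -/
/-!
Write `c = k + 1` (in the 1-indexed notation of the statement). The commutator
`τ σ τ⁻¹ σ⁻¹` of the two cycles, which share only the point `k`, is the 3-cycle through `1`, `k`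
and `c`; conjugating it by powers of `σ`, which fixes `c`, gives every 3-cycle
`(a c b) = (a c)(b c)` with `a, b ≤ k`. Products of two transpositions of `{1, …, k}` are
products of these, so every cycle of odd length on `{1, …, k}` lies in `⟨σ, τ⟩`. As `k` is
even, `σ = (1 2) · (2 3 … k)` then yields the transposition `(1 2)`, hence all transpositions
of `{1, …, k}`, hence every permutation supported there.
-/

open Equiv Equiv.Perm

section

variable {α : Type*} [DecidableEq α]

theorem swap_eq_swap_mul_swap_mul_swap {x y c : α} (hxy : x ≠ y) (hy : y ≠ c) :
    swap x y = swap x c * swap y c * swap x c := by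
  have h := swap_apply_apply (swap x c) y c
  rwa [swap_inv, swap_apply_right, swap_apply_of_ne_of_ne hxy.symm hy, swap_comm] at h

theorem swap_mul_swap_eq_of_ne {a b d e c : α} (hab : a ≠ b) (hde : d ≠ e) (hb : b ≠ c)
    (he : e ≠ c) :
    swap a b * swap d e =
      (swap a c * swap b c) * (swap a c * swap d c) * (swap e c * swap d c) := by
  rw [swap_eq_swap_mul_swap_mul_swap hab hb, swap_eq_swap_mul_swap_mul_swap hde he]
  group

variable {H : Subgroup (Perm α)} {c : α} {S : Set α}

theorem swap_mul_swap_mem_of_isCycle [Finite α] {σ : Perm α} (hσH : σ ∈ H) (hσ : σ.IsCycle)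
    (hσc : σ c = c) {x : α} (hx : σ x ≠ x) (hthree : swap x c * swap (σ x) c ∈ H)
    {a b : α} (ha : σ a ≠ a) (hb : σ b ≠ b) : swap a c * swap b c ∈ H := by
  have hconj : ∀ n : ℕ, ∀ y, swap ((σ ^ n) y) c = σ ^ n * swap y c * (σ ^ n)⁻¹ := fun n y => by
    rw [← swap_apply_apply, pow_apply_eq_self_of_apply_eq_self hσc]
  have hpow : ∀ n : ℕ, swap x c * swap ((σ ^ n) x) c ∈ H := by
    intro n
    induction n with
    | zero => simp
    | succ n ih =>
      have hstep : swap ((σ ^ n) x) c * swap ((σ ^ n) (σ x)) c ∈ H := by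
        rw [hconj, hconj, show σ ^ n * swap x c * (σ ^ n)⁻¹ * (σ ^ n * swap (σ x) c * (σ ^ n)⁻¹)
          = σ ^ n * (swap x c * swap (σ x) c) * (σ ^ n)⁻¹ by group]
        exact H.mul_mem (H.mul_mem (H.pow_mem hσH n) hthree) (H.inv_mem (H.pow_mem hσH n))
      have h := H.mul_mem ih hstep
      rwa [mul_assoc, swap_mul_self_mul, ← mul_apply, ← pow_succ] at h
  obtain ⟨i, rfl⟩ := hσ.exists_pow_eq hx ha
  obtain ⟨j, rfl⟩ := hσ.exists_pow_eq hx hb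
  have h := H.mul_mem (H.inv_mem (hpow i)) (hpow j)
  rwa [mul_inv_rev, swap_inv, swap_inv, mul_assoc, swap_mul_self_mul] at h

theorem swap_mul_swap_mem (hc : c ∉ S) (hthree : ∀ a ∈ S, ∀ b ∈ S, swap a c * swap b c ∈ H)
    {a b d e : α} (ha : a ∈ S) (hb : b ∈ S) (hd : d ∈ S) (he : e ∈ S) (hab : a ≠ b)
    (hde : d ≠ e) : swap a b * swap d e ∈ H := by
  have hne : ∀ {x}, x ∈ S → x ≠ c := fun hx h => hc (h ▸ hx)
  rw [swap_mul_swap_eq_of_ne hab hde (hne hb) (hne he)]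
  exact H.mul_mem (H.mul_mem (hthree a ha b hb) (hthree a ha d hd)) (hthree e he d hd)

theorem formPerm_mem_of_odd_length (hc : c ∉ S)
    (hthree : ∀ a ∈ S, ∀ b ∈ S, swap a c * swap b c ∈ H) :
    ∀ l : List α, l.Nodup → (∀ x ∈ l, x ∈ S) → Odd l.length → l.formPerm ∈ H
  | [], _, _, hodd => by simp at hodd
  | [_], _, _, _ => by simp
  | [_, _], _, _, hodd => by simp [Nat.odd_iff] at hodd
  | x :: y :: z :: l, hnd, hS, hodd => by
    have hxy : x ≠ y := by rintro rfl; simp at hnd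
    have hyz : y ≠ z := by rintro rfl; simp at hnd
    rw [List.formPerm_cons_cons, List.formPerm_cons_cons, ← mul_assoc]
    refine H.mul_mem (swap_mul_swap_mem hc hthree (hS x (by simp)) (hS y (by simp)) (hS y (by simp))
      (hS z (by simp)) hxy hyz) (formPerm_mem_of_odd_length hc hthree (z :: l)
        hnd.of_cons.of_cons (fun w hw => hS w (.tail _ (.tail _ hw))) ?_)
    simpa [Nat.odd_add_one, parity_simps] using hodd

theorem forall_swap_mem_of_swap_mem (hc : c ∉ S)
    (hthree : ∀ a ∈ S, ∀ b ∈ S, swap a c * swap b c ∈ H)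
    {x y : α} (hx : x ∈ S) (hy : y ∈ S) (hxy : x ≠ y) (hmem : swap x y ∈ H) :
    ∀ a ∈ S, ∀ b ∈ S, swap a b ∈ H := by
  intro a ha b hb
  rcases eq_or_ne a b with rfl | hab
  · exact swap_self a ▸ H.one_mem
  rw [← mul_swap_mul_self x y (swap a b)]
  exact H.mul_mem (swap_mul_swap_mem hc hthree ha hb hx hy hab hxy) hmem

theorem mem_of_forall_swap_mem [Finite α] (hswap : ∀ a ∈ S, ∀ b ∈ S, swap a b ∈ H) {f : Perm α}
    (hf : ∀ x ∉ S, f x = x) : f ∈ H := by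
  set T := {g : Perm α | ∃ a ∈ S, ∃ b ∈ S, a ≠ b ∧ swap a b = g}
  have hT : ∀ g ∈ T, g.IsSwap := by
    rintro _ ⟨a, -, b, -, hab, rfl⟩
    exact ⟨a, b, hab, rfl⟩
  have hTH : Subgroup.closure T ≤ H :=
    (Subgroup.closure_le H).2 (by rintro _ ⟨a, ha, b, hb, -, rfl⟩; exact hswap a ha b hb)
  refine hTH ((mem_closure_isSwap hT).2 ⟨Set.toFinite _, fun x => ?_⟩)
  by_cases hfx : f x = x
  · rw [hfx]
    exact MulAction.mem_orbit_self x
  have hx : x ∈ S := by_contra fun h => hfx (hf x h)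
  have hfx' : f x ∈ S := by_contra fun h => hfx (f.injective (hf _ h))
  exact ⟨⟨swap x (f x), Subgroup.subset_closure ⟨x, hx, f x, hfx', Ne.symm hfx, rfl⟩⟩,
    swap_apply_left x (f x)⟩

theorem mem_of_formPerm_mem_of_even_length [Finite α] (hc : c ∉ S)
    (hthree : ∀ a ∈ S, ∀ b ∈ S, swap a c * swap b c ∈ H) {l : List α} (hnd : l.Nodup)
    (hS : ∀ z ∈ l, z ∈ S) (hlen : 2 ≤ l.length) (heven : Even l.length) (hmem : l.formPerm ∈ H)
    {f : Perm α} (hf : ∀ x ∉ S, f x = x) : f ∈ H := by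
  obtain ⟨x, y, l, rfl⟩ : ∃ x y l', l = x :: y :: l' := by
    rcases l with _ | ⟨x, _ | ⟨y, l⟩⟩
    · simp at hlen
    · simp at hlen
    · exact ⟨x, y, l, rfl⟩
  have hxy : x ≠ y := by rintro rfl; simp at hnd
  rw [List.formPerm_cons_cons] at hmem
  have hodd : (y :: l).formPerm ∈ H := formPerm_mem_of_odd_length hc hthree (y :: l) hnd.of_cons
    (fun z hz => hS z (List.mem_cons_of_mem x hz)) (by simpa [parity_simps] using heven)
  have hswap : swap x y ∈ H := (H.mul_mem_cancel_right hodd).1 hmem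
  exact mem_of_forall_swap_mem
    (forall_swap_mem_of_swap_mem hc hthree (hS x (by simp)) (hS y (by simp)) hxy hswap) hf

end

namespace List

theorem mem_take_finRange {n k : ℕ} {x : Fin n} : x ∈ (finRange n).take k ↔ x.val < k := by
  simp only [mem_iff_getElem, length_take, length_finRange, getElem_take, getElem_finRange,
    Fin.ext_iff, Fin.val_cast]
  grind

theorem mem_drop_finRange {n i : ℕ} {x : Fin n} : x ∈ (finRange n).drop i ↔ i ≤ x.val := by
  rw [mem_iff_getElem]
  constructor
  · rintro ⟨j, hj, rfl⟩
    simp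
  · intro h
    exact ⟨x.val - i, by simp only [length_drop, length_finRange]; omega,
      by ext; simp only [getElem_drop, getElem_finRange, Fin.cast_mk]; omega⟩

theorem val_formPerm_take_finRange {n k : ℕ} (hk : k ≤ n) (x : Fin n) :
    (((finRange n).take k).formPerm x : ℕ) =
      if x.val + 1 < k then x.val + 1 else if x.val + 1 = k then 0 else x.val := by
  by_cases hx : x.val < k
  · have h := formPerm_apply_getElem _ ((nodup_finRange n).sublist (take_sublist k _)) x.val
      (by simpa [hk] using hx)
    simp only [getElem_take, getElem_finRange, length_take, length_finRange,
      Nat.min_eq_left hk, Fin.cast_mk, Fin.eta] at h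
    rw [h]
    split_ifs with hlt heq
    · exact Nat.mod_eq_of_lt hlt
    · simp [heq]
    · omega
  · rw [formPerm_apply_of_notMem (mt mem_take_finRange.1 hx)]
    grind

theorem val_formPerm_drop_finRange {n i : ℕ} (x : Fin n) :
    (((finRange n).drop i).formPerm x : ℕ) =
      if x.val < i then x.val else if x.val + 1 < n then x.val + 1 else i := by
  by_cases hx : i ≤ x.val
  · have h := formPerm_apply_getElem _ ((nodup_finRange n).sublist (drop_sublist i _))
      (x.val - i) (by simp only [length_drop, length_finRange]; omega)
    simp only [getElem_drop, getElem_finRange, length_drop, length_finRange, Fin.cast_mk,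
      Nat.add_sub_cancel' hx, Fin.eta] at h
    rw [h, Fin.val_mk]
    split_ifs with hlt hlt'
    · omega
    · rw [Nat.mod_eq_of_lt (by omega)]
      omega
    · rw [show x.val - i + 1 = n - i by omega, Nat.mod_self]
      omega
  · rw [formPerm_apply_of_notMem (mt mem_drop_finRange.1 hx)]
    grind

theorem formPerm_take_finRange_apply_ne_iff {n k : ℕ} (hk : 2 ≤ k) (hkn : k ≤ n) (x : Fin n) :
    ((finRange n).take k).formPerm x ≠ x ↔ x.val < k := by
  rw [Ne, Fin.ext_iff, val_formPerm_take_finRange hkn]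
  split_ifs <;> omega

end List

section

open List

variable {k : ℕ}

theorem swap_mul_swap_eq_commutator (hk : 2 ≤ k) :
    swap ⟨k - 1, by omega⟩ ⟨k, by omega⟩ * swap ⟨0, by omega⟩ ⟨k, by omega⟩ =
      ((finRange (2 * k - 1)).drop (k - 1)).formPerm * ((finRange (2 * k - 1)).take k).formPerm *
        (((finRange (2 * k - 1)).take k).formPerm *
          ((finRange (2 * k - 1)).drop (k - 1)).formPerm)⁻¹ := by
  refine eq_mul_inv_iff_mul_eq.2 (Equiv.ext fun x => Fin.ext ?_)
  simp only [mul_apply, swap_apply_def, apply_ite Fin.val, Fin.ext_iff,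
    val_formPerm_take_finRange (show k ≤ 2 * k - 1 by omega), val_formPerm_drop_finRange]
  grind

theorem swap_mul_swap_mem_closure (hk : 2 ≤ k) {a b : Fin (2 * k - 1)} (ha : a.val < k)
    (hb : b.val < k) :
    swap a ⟨k, by omega⟩ * swap b ⟨k, by omega⟩ ∈
      Subgroup.closure {((finRange (2 * k - 1)).take k).formPerm,
        ((finRange (2 * k - 1)).drop (k - 1)).formPerm} := by
  set σ := ((finRange (2 * k - 1)).take k).formPerm
  set τ := ((finRange (2 * k - 1)).drop (k - 1)).formPerm
  have hσG : σ ∈ Subgroup.closure {σ, τ} := Subgroup.subset_closure (by simp)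
  have hτG : τ ∈ Subgroup.closure {σ, τ} := Subgroup.subset_closure (by simp)
  have hmoved : ∀ x, σ x ≠ x ↔ x.val < k := formPerm_take_finRange_apply_ne_iff hk (by omega)
  have hσp : σ ⟨k - 1, by omega⟩ = ⟨0, by omega⟩ := by
    rw [Fin.ext_iff, val_formPerm_take_finRange (by omega), Fin.val_mk, if_neg (by omega),
      if_pos (by omega)]
  have hσc : σ ⟨k, by omega⟩ = ⟨k, by omega⟩ := not_not.1 fun h => lt_irrefl k ((hmoved _).1 h)
  refine swap_mul_swap_mem_of_isCycle hσG
    (isCycle_formPerm ((nodup_finRange _).sublist (take_sublist _ _))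
      (by simp only [length_take, length_finRange]; omega)) hσc
    ((hmoved ⟨k - 1, by omega⟩).2 (show k - 1 < k by omega)) ?_ ((hmoved a).2 ha) ((hmoved b).2 hb)
  rw [hσp, swap_mul_swap_eq_commutator hk]
  exact Subgroup.mul_mem _ (Subgroup.mul_mem _ hτG hσG)
    (Subgroup.inv_mem _ (Subgroup.mul_mem _ hσG hτG))

end

/-- For even `k ≥ 2`, with `σ = (1 2 … k)` and `τ = (k k+1 … 2k−1)`
in `S_{2k−1}` (0-indexed: `σ` is the cycle on indices `0,…,k-1` and `τ` the cycle
on indices `k-1,…,2k-2`), every permutation fixing each of the last `k-1` points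
(0-indexed: all points with index `≥ k`) lies in `⟨σ, τ⟩`. -/
theorem stmt_3 (k : ℕ) (hk : 2 ≤ k) (hkeven : Even k)
    (σ τ : Equiv.Perm (Fin (2 * k - 1)))
    (hσ : σ = ((List.finRange (2 * k - 1)).take k).formPerm)
    (hτ : τ = ((List.finRange (2 * k - 1)).drop (k - 1)).formPerm)
    (ρ : Equiv.Perm (Fin (2 * k - 1))) (hρ : ∀ x : Fin (2 * k - 1), k ≤ x.val → ρ x = x) :
    ρ ∈ Subgroup.closure {σ, τ} := by
  subst hσ hτ
  have hlen : ((List.finRange (2 * k - 1)).take k).length = k := by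
    simp only [List.length_take, List.length_finRange]; omega
  exact mem_of_formPerm_mem_of_even_length (S := {x : Fin (2 * k - 1) | x.val < k})
    (c := ⟨k, by omega⟩) (lt_irrefl k) (fun a ha b hb => swap_mul_swap_mem_closure hk ha hb)
    ((List.nodup_finRange _).sublist (List.take_sublist _ _))
    (fun z hz => List.mem_take_finRange.1 hz) (by rw [hlen]; exact hk) (by rw [hlen]; exact hkeven)
    (Subgroup.subset_closure (by simp)) (fun z hz => hρ z (not_lt.1 hz))
end

section
/- Let S ⊆ {1, …, n} and let c = (a_1 a_2 … a_m) be a cycle in S_n (m ≥ 2, the a_i distinct) with support C = {a_1, …, a_m}. Suppose S ∩ C ≠ ∅ and S ⊄ C. Then the subgroup of S_n generated by the subsymmetric group on S together with c equals the subsymmetric group on S ∪ C, i.e. it consists exactly of the permutations fixing every point outside S ∪ C. -/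
/-- Let `S ⊆ {1,…,n}` and let `c` be a cycle in `S_n` with support
`C`. If `S ∩ C ≠ ∅` and `S ⊄ C`, then the subgroup generated by the
subsymmetric group on `S` together with `c` is exactly the subsymmetric group
on `S ∪ C`, i.e. it consists of the permutations fixing every point outside
`S ∪ C`. -/
theorem stmt_4 (n : ℕ) (S : Set (Fin n)) (c : Equiv.Perm (Fin n)) (hc : c.IsCycle)
    (hinter : (S ∩ ↑c.support).Nonempty) (hnsub : ¬ S ⊆ ↑c.support) :
    ∀ g : Equiv.Perm (Fin n),
      g ∈ Subgroup.closure ({g : Equiv.Perm (Fin n) | ∀ x ∉ S, g x = x} ∪ {c}) ↔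
        ∀ x, x ∉ S ∪ ↑c.support → g x = x := by
  classical
  set T : Set (Fin n) := S ∪ ↑c.support with hT
  set H : Subgroup (Equiv.Perm (Fin n)) :=
    Subgroup.closure ({g : Equiv.Perm (Fin n) | ∀ x ∉ S, g x = x} ∪ {c}) with hH
  obtain ⟨z, hzS, hzC⟩ := Set.not_subset.mp hnsub
  obtain ⟨a, haS, haC⟩ := hinter
  have hcz : c z = z := Equiv.Perm.notMem_support.mp hzC
  have hca : c a ≠ a := Equiv.Perm.mem_support.mp haC
  have hcH : c ∈ H := Subgroup.subset_closure (Or.inr rfl)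
  have hSfix : ∀ g : Equiv.Perm (Fin n), (∀ x ∉ S, g x = x) → g ∈ H :=
    fun g hg => Subgroup.subset_closure (Or.inl hg)
  -- swaps within S
  have hswapS : ∀ s ∈ S, ∀ s' ∈ S, Equiv.swap s s' ∈ H := by
    intro s hs s' hs'
    apply hSfix
    intro x hx
    apply Equiv.swap_apply_of_ne_of_ne
    · rintro rfl; exact hx hs
    · rintro rfl; exact hx hs'
  -- swaps (c^k a) z
  have hswapC : ∀ k : ℕ, Equiv.swap ((c ^ k) a) z ∈ H := by
    intro k
    induction k with
    | zero => simpa using hswapS a haS z hzS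
    | succ k ih =>
        have h1 : Equiv.swap ((c ^ (k + 1)) a) z
            = c * Equiv.swap ((c ^ k) a) z * c⁻¹ := by
          rw [← Equiv.swap_apply_apply, hcz, pow_succ', Equiv.Perm.mul_apply]
        rw [h1]
        exact mul_mem (mul_mem hcH ih) (inv_mem hcH)
  -- swaps x z for x ∈ T
  have hswapz : ∀ x ∈ T, Equiv.swap x z ∈ H := by
    intro x hx
    rcases hx with hx | hx
    · exact hswapS x hx z hzS
    · have hcx : c x ≠ x := Equiv.Perm.mem_support.mp hx
      obtain ⟨k, hk⟩ := hc.exists_pow_eq hca hcx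
      rw [← hk]; exact hswapC k
  -- arbitrary swaps within T
  have hswapT : ∀ x ∈ T, ∀ y ∈ T, Equiv.swap x y ∈ H := by
    intro x hx y hy
    by_cases hxy : x = y
    · subst hxy; simp only [Equiv.swap_self]
      exact (Equiv.Perm.one_def ▸ one_mem H : (Equiv.refl (Fin n)) ∈ H)
    by_cases hxz : x = z
    · subst hxz; rw [Equiv.swap_comm]; exact hswapz y hy
    by_cases hyz : y = z
    · subst hyz; exact hswapz x hx
    have h1 : Equiv.swap x y
        = Equiv.swap x z * Equiv.swap z y * (Equiv.swap x z)⁻¹ := by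
      rw [← Equiv.swap_apply_apply, Equiv.swap_apply_right,
        Equiv.swap_apply_of_ne_of_ne (Ne.symm hxy) hyz]
    rw [h1]
    exact mul_mem (mul_mem (hswapz x hx) (Equiv.swap_comm z y ▸ hswapz y hy))
      (inv_mem (hswapz x hx))
  -- main induction
  have main : ∀ m : ℕ, ∀ g : Equiv.Perm (Fin n), g.support.card = m →
      (∀ x ∉ T, g x = x) → g ∈ H := by
    intro m
    induction m using Nat.strong_induction_on with
    | _ m ih =>
      intro g hcard hg
      by_cases h1 : g = 1
      · subst h1; exact one_mem H
      · obtain ⟨x, hx⟩ : ∃ x, g x ≠ x := by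
          by_contra h
          push_neg at h
          exact h1 (Equiv.ext h)
        have hxT : x ∈ T := by
          by_contra h; exact hx (hg x h)
        have hgxT : g x ∈ T := by
          by_contra h
          exact hx (g.injective (hg _ h))
        have hg' : ∀ y ∉ T, (Equiv.swap x (g x) * g) y = y := by
          intro y hy
          rw [Equiv.Perm.mul_apply, hg y hy]
          apply Equiv.swap_apply_of_ne_of_ne
          · rintro rfl; exact hy hxT
          · rintro rfl; exact hy hgxT
        have hlt : (Equiv.swap x (g x) * g).support.card < m :=
          hcard ▸ Equiv.Perm.card_support_swap_mul hx
        have hmem := ih _ hlt _ rfl hg'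
        have hgeq : g = Equiv.swap x (g x) * (Equiv.swap x (g x) * g) := by
          rw [← mul_assoc, Equiv.swap_mul_self, one_mul]
        rw [hgeq]
        exact mul_mem (hswapT x hxT (g x) hgxT) hmem
  intro g
  constructor
  · intro hg
    have hle : ({g : Equiv.Perm (Fin n) | ∀ x ∉ S, g x = x} ∪ {c} : Set _) ⊆
        {g : Equiv.Perm (Fin n) | ∀ x ∉ T, g x = x} := by
      rintro f (hf | rfl)
      · intro x hx; exact hf x fun h => hx (Or.inl h)
      · intro x hx
        exact Equiv.Perm.notMem_support.mp fun h => hx (Or.inr h)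
    have : H ≤
        { carrier := {g : Equiv.Perm (Fin n) | ∀ x ∉ T, g x = x}
          one_mem' := fun x _ => rfl
          mul_mem' := by
            intro p q hp hq x hx
            rw [Equiv.Perm.mul_apply, hq x hx, hp x hx]
          inv_mem' := by
            intro p hp x hx
            rw [Equiv.Perm.inv_eq_iff_eq]
            exact (hp x hx).symm } :=
      (Subgroup.closure_le _).mpr hle
    exact this hg
  · intro hg
    exact main _ g rfl hg
end

section
/- Let k ≥ 2 be even and n ≥ 2k−1. Then the minimum cardinality of a set T of k-cycles in S_n such that T generates S_n is exactly ⌈(n−1)/(k−1)⌉. -/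
/-!
Lower bound: join the points of each `g.support`, `g ∈ T`, by a star. Since `⟨T⟩ = S_n` is
transitive, this graph is connected, so it has at least `n - 1` edges, while it has at most
`∑ g ∈ T, (|g.support| - 1) = |T| (k - 1)` of them.

Upper bound: take the `k`-cycles on the blocks `[s i, s i + k)` with `s i = min (i (k - 1)) (n - k)`
for `i < ⌈(n - 1) / (k - 1)⌉`; consecutive blocks overlap and together they cover `Fin n`. The
first two cycles `c`, `d` meet only in `k - 1`, so `[c, d]` is a 3-cycle through `0`, `k - 1` and
the point `p = k` fixed by `c`. Conjugating it by powers of `c` gives all 3-cycles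
`(swap u p) * (swap v p)` with `u, v ∈ c.support`, and as `c` is odd (`k` is even) the group also
contains the transpositions `swap u p`. Conjugating by the later cycles spreads the transpositions
`swap 0 v` along the chain of blocks, and transpositions generate `S_n`.
-/

open Equiv Equiv.Perm Subgroup Finset

namespace Equiv.Perm

variable {α : Type*} [DecidableEq α]

theorem commutator_eq_swap_mul_swap [Fintype α] {c d : Perm α} {x : α} (hx : x ∈ d.support)
    (hcx : c x ∉ d.support) (hfix : ∀ z ∈ d.support, z ≠ x → c z = z) :
    c * d * c⁻¹ * d⁻¹ = swap (c x) (d x) * swap x (d x) := by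
  set σ := swap x (c x) with hσ
  have hdisj : Disjoint (σ⁻¹ * c) d := by
    intro z
    by_cases hz : z ∈ d.support
    · left
      by_cases hzx : z = x
      · simp [σ, hzx]
      · have hzc : z ≠ c x := fun h => hcx (h ▸ hz)
        rw [mul_apply, hfix z hz hzx, hσ, swap_inv, swap_apply_of_ne_of_ne hzx hzc]
    · exact Or.inr (notMem_support.mp hz)
  have hxy : x ≠ c x := fun h => hcx (h ▸ hx)
  have hpx : d x ≠ x := mem_support.mp hx
  calc c * d * c⁻¹ * d⁻¹ = σ * ((σ⁻¹ * c) * d * (σ⁻¹ * c)⁻¹) * σ⁻¹ * d⁻¹ := by group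
    _ = σ * (d * σ * d⁻¹) := by rw [hdisj.commute.eq, hσ, swap_inv]; group
    _ = swap x (c x) * swap (d x) (c x) := by rw [← swap_apply_apply, notMem_support.mp hcx]
    _ = swap (c x) (d x) * swap x (d x) := by
        rw [swap_comm x (c x), ← swap_mul_swap_mul_swap hpx.symm hxy, mul_assoc, swap_mul_self,
          mul_one, swap_comm (d x) (c x)]

theorem swap_mem_of_sameCycle [Finite α] {G : Subgroup (Perm α)} {c : Perm α} {p a b : α}
    (hcG : c ∈ G) (hp : c p = p) (h : swap p a ∈ G) (hab : c.SameCycle a b) : swap p b ∈ G := by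
  obtain ⟨j, -, rfl⟩ := hab.exists_pow_eq'
  have := G.mul_mem (G.mul_mem (G.pow_mem hcG j) h) (G.inv_mem (G.pow_mem hcG j))
  rwa [← swap_apply_apply, pow_apply_eq_self_of_apply_eq_self hp] at this

theorem swap_mul_swap_mem_conj {G : Subgroup (Perm α)} {g : Perm α} {u v p : α} (hg : g ∈ G)
    (hgp : g p = p) (h : swap u p * swap v p ∈ G) : swap (g u) p * swap (g v) p ∈ G := by
  have hconj : swap (g u) (g p) * swap (g v) (g p) = g * (swap u p * swap v p) * g⁻¹ := by
    rw [swap_apply_apply, swap_apply_apply]; group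
  rw [hgp] at hconj
  exact hconj ▸ G.mul_mem (G.mul_mem hg h) (G.inv_mem hg)

theorem swap_mul_swap_mem_of_sameCycle [Finite α] {G : Subgroup (Perm α)} {c : Perm α}
    {x y p : α} (hcG : c ∈ G) (hp : c p = p) (h : swap (c x) p * swap x p ∈ G)
    (hxy : c.SameCycle x y) : swap x p * swap y p ∈ G := by
  have h' : swap x p * swap (c x) p ∈ G := by simpa using G.inv_mem h
  have hpow : ∀ j : ℕ, swap x p * swap ((c ^ j) x) p ∈ G := by
    intro j
    induction j with
    | zero => simp
    | succ j ih =>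
      have step := swap_mul_swap_mem_conj (G.pow_mem hcG j)
        (pow_apply_eq_self_of_apply_eq_self hp j) h'
      rw [← mul_apply, ← pow_succ] at step
      simpa [mul_assoc] using G.mul_mem ih step
  obtain ⟨j, -, rfl⟩ := hxy.exists_pow_eq'
  exact hpow j

theorem swap_mem_of_sign_eq_neg_one [Fintype α] {G : Subgroup (Perm α)} {c : Perm α} {x p : α}
    (hcG : c ∈ G) (hsign : sign c = -1) (hp : c p = p)
    (h : ∀ u ∈ c.support, swap x p * swap u p ∈ G) : swap x p ∈ G := by
  set S : Set (Perm α) := (fun u => swap u p) '' c.support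
  have hS : ∀ τ ∈ S, τ.IsSwap := by
    rintro _ ⟨u, hu, rfl⟩
    exact ⟨u, p, fun hup => mem_support.mp hu (hup ▸ hp), rfl⟩
  have hcS : c ∈ closure S := by
    refine (mem_closure_isSwap hS).2 ⟨Set.toFinite _, fun z => ?_⟩
    by_cases hz : z ∈ c.support
    · refine ⟨⟨swap (c z) p * swap z p, mul_mem
        (subset_closure ⟨c z, apply_mem_support.mpr hz, rfl⟩) (subset_closure ⟨z, hz, rfl⟩)⟩, ?_⟩
      simp [Subgroup.smul_def]
    · rw [notMem_support.mp hz]; exact MulAction.mem_orbit_self z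
  have step : ∀ u ∈ c.support, ∀ g : Perm α,
      (g ∈ G ∧ sign g = 1) ∨ (swap x p * g ∈ G ∧ sign g = -1) →
      (swap u p * g ∈ G ∧ sign (swap u p * g) = 1) ∨
        (swap x p * (swap u p * g) ∈ G ∧ sign (swap u p * g) = -1) := by
    intro u hu g hg
    have hup : u ≠ p := fun hup => mem_support.mp hu (hup ▸ hp)
    rw [sign_mul, sign_swap hup]
    rcases hg with ⟨hgG, hg1⟩ | ⟨hgG, hg1⟩
    · exact Or.inr ⟨by simpa [mul_assoc] using G.mul_mem (h u hu) hgG, by simp [hg1]⟩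
    · exact Or.inl ⟨by simpa [mul_assoc] using G.mul_mem (G.inv_mem (h u hu)) hgG, by simp [hg1]⟩
  have key : ∀ g ∈ closure S, (g ∈ G ∧ sign g = 1) ∨ (swap x p * g ∈ G ∧ sign g = -1) := by
    intro g hg
    induction hg using closure_induction_left with
    | one => simp
    | mul_left τ hτ g _ ih =>
      obtain ⟨u, hu, rfl⟩ := hτ
      exact step u hu g ih
    | inv_mul_cancel τ hτ g _ ih =>
      obtain ⟨u, hu, rfl⟩ := hτ
      simpa using step u hu g ih
  obtain ⟨-, hc1⟩ | ⟨hc, -⟩ := key c hcS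
  · exact absurd (hsign.symm.trans hc1) (by decide)
  · simpa using G.mul_mem hc (G.inv_mem hcG)

end Equiv.Perm

section SupportGraph

variable {α : Type*}

def starEdges : List α → List (Sym2 α)
  | [] => []
  | a :: l => l.map (s(a, ·))

theorem length_starEdges (l : List α) : (starEdges l).length = l.length - 1 := by
  cases l <;> simp [starEdges]

theorem reachable_of_mem_of_starEdges_subset {s : Set (Sym2 α)} {l : List α}
    (hl : ∀ e ∈ starEdges l, e ∈ s) {x y : α} (hx : x ∈ l) (hy : y ∈ l) :
    (SimpleGraph.fromEdgeSet s).Reachable x y := by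
  cases l with
  | nil => simp at hx
  | cons a t =>
    have hreach : ∀ z ∈ a :: t, (SimpleGraph.fromEdgeSet s).Reachable a z := by
      intro z hz
      by_cases hza : z = a
      · rw [hza]
      have hzt : z ∈ t := by simpa [hza] using hz
      exact SimpleGraph.Adj.reachable
        ((SimpleGraph.fromEdgeSet_adj _).2 ⟨hl _ (List.mem_map_of_mem hzt), Ne.symm hza⟩)
    exact (hreach x hx).symm.trans (hreach y hy)

variable [Fintype α] [DecidableEq α]

noncomputable def supportGraph (T : Finset (Perm α)) : SimpleGraph α :=
  SimpleGraph.fromEdgeSet {e | ∃ g ∈ T, e ∈ starEdges g.support.toList}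

theorem card_edgeSet_supportGraph_le (T : Finset (Perm α)) :
    Nat.card (supportGraph T).edgeSet ≤ ∑ g ∈ T, (#g.support - 1) := by
  have hsub : (supportGraph T).edgeSet ⊆
      ↑(T.biUnion fun g => (starEdges g.support.toList).toFinset) := by
    intro e he
    rw [supportGraph, SimpleGraph.edgeSet_fromEdgeSet] at he
    obtain ⟨g, hg, he⟩ := he.1
    simpa using ⟨g, hg, he⟩
  calc Nat.card (supportGraph T).edgeSet
      ≤ #(T.biUnion fun g => (starEdges g.support.toList).toFinset) :=
        (Nat.card_mono (Finset.finite_toSet _) hsub).trans_eq (Nat.card_eq_finsetCard _)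
    _ ≤ ∑ g ∈ T, #(starEdges g.support.toList).toFinset := card_biUnion_le
    _ ≤ ∑ g ∈ T, (#g.support - 1) := sum_le_sum fun g _ => by
        simpa [length_starEdges] using List.toFinset_card_le (starEdges g.support.toList)

theorem reachable_supportGraph_of_mem_closure {T : Finset (Perm α)} {σ : Perm α}
    (hσ : σ ∈ closure (T : Set (Perm α))) (x : α) : (supportGraph T).Reachable x (σ x) := by
  induction hσ using closure_induction generalizing x with
  | mem g hg =>
    by_cases hx : x ∈ g.support
    · refine reachable_of_mem_of_starEdges_subset (fun e he => ?_) (mem_toList.2 hx)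
        (mem_toList.2 (apply_mem_support.2 hx))
      exact ⟨g, hg, he⟩
    · rw [notMem_support.1 hx]
  | one => rfl
  | mul σ τ _ _ hσ hτ => exact (hτ x).trans (hσ (τ x))
  | inv σ _ hσ => simpa using (hσ (σ⁻¹ x)).symm

theorem card_le_sum_card_support_sub_one_add_one {T : Finset (Perm α)}
    (hT : closure (T : Set (Perm α)) = ⊤) : Fintype.card α ≤ ∑ g ∈ T, (#g.support - 1) + 1 := by
  rcases isEmpty_or_nonempty α with hα | hα
  · simp
  have hconn : (supportGraph T).Connected := by
    refine (SimpleGraph.connected_iff _).2 ⟨fun x y => ?_, hα⟩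
    have hxy : swap x y ∈ closure (T : Set (Perm α)) := hT ▸ mem_top _
    exact swap_apply_left x y ▸ reachable_supportGraph_of_mem_closure hxy x
  rw [← Nat.card_eq_fintype_card]
  exact hconn.card_vert_le_card_edgeSet_add_one.trans
    (Nat.add_le_add_right (card_edgeSet_supportGraph_le T) 1)

theorem ceilDiv_le_card_of_closure_eq_top {k : ℕ} (hk : 2 ≤ k) {T : Finset (Perm α)}
    (hT : ∀ g ∈ T, #g.support = k)
    (hgen : closure (T : Set (Perm α)) = ⊤) : (Fintype.card α - 1) ⌈/⌉ (k - 1) ≤ #T := by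
  have hcard := card_le_sum_card_support_sub_one_add_one hgen
  rw [sum_congr rfl fun g hg => by rw [hT g hg], sum_const, smul_eq_mul] at hcard
  rw [ceilDiv_le_iff_le_mul (by omega), mul_comm]
  omega

end SupportGraph

section ConsecutiveCycle

variable {n : ℕ} [NeZero n] {k a : ℕ}

def consecutiveCycle (k a : ℕ) : Perm (Fin n) :=
  Fin.cycleIcc (Fin.ofNat n a) (Fin.ofNat n (a + (k - 1)))

theorem ofNat_lt_ofNat_add_sub_one (hk : 2 ≤ k) (h : a + k ≤ n) :
    Fin.ofNat n a < Fin.ofNat n (a + (k - 1)) := by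
  rw [Fin.lt_def, Fin.val_ofNat, Fin.val_ofNat, Nat.mod_eq_of_lt (by omega),
    Nat.mod_eq_of_lt (by omega)]
  omega

theorem mem_support_consecutiveCycle (hk : 2 ≤ k) (h : a + k ≤ n) {x : Fin n} :
    x ∈ (consecutiveCycle k a : Perm (Fin n)).support ↔ a ≤ x ∧ (x : ℕ) < a + k := by
  have ha : (Fin.ofNat n a : ℕ) = a := by rw [Fin.val_ofNat, Nat.mod_eq_of_lt (by omega)]
  have hb : (Fin.ofNat n (a + (k - 1)) : ℕ) = a + (k - 1) := by
    rw [Fin.val_ofNat, Nat.mod_eq_of_lt (by omega)]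
  rw [mem_support, consecutiveCycle]
  rcases lt_or_ge x (Fin.ofNat n a) with hx | hx
  · rw [Fin.cycleIcc_of_lt hx]; rw [Fin.lt_def] at hx; omega
  rcases lt_or_ge (Fin.ofNat n (a + (k - 1))) x with hx' | hx'
  · rw [Fin.cycleIcc_of_gt hx']; rw [Fin.lt_def] at hx'; omega
  rw [Fin.cycleIcc_of_le_of_le hx hx']
  rw [Fin.le_def] at hx hx'
  split_ifs with hxb
  · subst hxb; simp only [ne_eq, Fin.ext_iff]; omega
  · rw [Fin.ext_iff] at hxb
    simp only [ne_eq, Fin.ext_iff, Fin.val_add, Fin.val_one',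
      Nat.mod_eq_of_lt (show 1 < n by omega)]
    rw [Nat.mod_eq_of_lt (by omega)]; omega

theorem isCycle_consecutiveCycle (hk : 2 ≤ k) (h : a + k ≤ n) :
    (consecutiveCycle k a : Perm (Fin n)).IsCycle :=
  Fin.isCycle_cycleIcc (ofNat_lt_ofNat_add_sub_one hk h)

theorem card_support_consecutiveCycle (hk : 2 ≤ k) (h : a + k ≤ n) :
    #(consecutiveCycle k a : Perm (Fin n)).support = k := by
  have := (isCycle_consecutiveCycle hk h).cycleType
  have hlt := ofNat_lt_ofNat_add_sub_one hk h
  rw [consecutiveCycle, Fin.cycleType_cycleIcc_of_lt hlt, Multiset.singleton_inj,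
    Fin.val_ofNat, Fin.val_ofNat, Nat.mod_eq_of_lt (by omega), Nat.mod_eq_of_lt (by omega)] at this
  rw [consecutiveCycle, ← this]
  omega

theorem consecutiveCycle_apply_last (hk : 2 ≤ k) (h : a + k ≤ n) :
    consecutiveCycle k a (Fin.ofNat n (a + (k - 1))) = Fin.ofNat n a :=
  Fin.cycleIcc_of_last (ofNat_lt_ofNat_add_sub_one hk h).le

end ConsecutiveCycle

section Generation

variable {n k : ℕ}

theorem swap_zero_mem_of_lt [NeZero n] (hk : 2 ≤ k) (hkeven : Even k) (hn : 2 * k - 1 ≤ n)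
    {G : Subgroup (Perm (Fin n))} (h0 : consecutiveCycle k 0 ∈ G)
    (h1 : consecutiveCycle k (k - 1) ∈ G) {v : Fin n} (hv : (v : ℕ) < k) : swap 0 v ∈ G := by
  set c : Perm (Fin n) := consecutiveCycle k 0
  set d : Perm (Fin n) := consecutiveCycle k (k - 1)
  set x := Fin.ofNat n (0 + (k - 1))
  have hmem_c : ∀ z : Fin n, z ∈ c.support ↔ (z : ℕ) < k := fun z => by
    simpa using mem_support_consecutiveCycle (n := n) (a := 0) hk (by omega)
  have hmem_d : ∀ z : Fin n, z ∈ d.support ↔ k - 1 ≤ z ∧ (z : ℕ) < k - 1 + k := fun z =>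
    mem_support_consecutiveCycle hk (by omega)
  have hx : (x : ℕ) = k - 1 := by simp [x, Nat.mod_eq_of_lt (show k - 1 < n by omega)]
  have hcx : c x = 0 :=
    (consecutiveCycle_apply_last (n := n) (a := 0) hk (by omega)).trans (Fin.ofNat_zero n)
  have hxd : x ∈ d.support := (hmem_d x).2 (by omega)
  have hcxd : c x ∉ d.support := by rw [hcx, hmem_d, Fin.val_zero]; omega
  have hfix : ∀ z ∈ d.support, z ≠ x → c z = z := fun z hz hzx => by
    rw [← notMem_support, hmem_c]
    rw [hmem_d] at hz
    rw [ne_eq, Fin.ext_iff, hx] at hzx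
    omega
  set p := d x
  have hp : c p = p := hfix p (apply_mem_support.2 hxd) (mem_support.1 hxd)
  have hcomm : swap (c x) p * swap x p ∈ G := commutator_eq_swap_mul_swap hxd hcxd hfix ▸
    G.mul_mem (G.mul_mem (G.mul_mem h0 h1) (G.inv_mem h0)) (G.inv_mem h1)
  have hc := isCycle_consecutiveCycle (n := n) (a := 0) hk (by omega)
  have hsign : sign c = -1 := by
    rw [hc.sign, card_support_consecutiveCycle hk (by omega), hkeven.neg_one_pow]
  have hxc : x ∈ c.support := (hmem_c x).2 (by omega)
  have hthree : ∀ u ∈ c.support, swap x p * swap u p ∈ G := fun u hu =>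
    swap_mul_swap_mem_of_sameCycle h0 hp hcomm (hc.sameCycle (mem_support.1 hxc) (mem_support.1 hu))
  have hxp : swap x p ∈ G := swap_mem_of_sign_eq_neg_one h0 hsign hp hthree
  have hup : ∀ u ∈ c.support, swap u p ∈ G := fun u hu => by
    simpa [← mul_assoc] using G.mul_mem hxp (hthree u hu)
  have h0p : swap 0 p ∈ G := hup 0 ((hmem_c 0).2 (by rw [Fin.val_zero]; omega))
  exact SubmonoidClass.swap_mem_trans G h0p (swap_comm v p ▸ hup v ((hmem_c v).2 hv))

theorem eq_top_of_consecutiveCycle_mem [NeZero n] {m : ℕ} (hk : 2 ≤ k) (hkeven : Even k)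
    {G : Subgroup (Perm (Fin n))} {s : ℕ → ℕ} (hs0 : s 0 = 0) (hs1 : s 1 = k - 1) (hm : 2 ≤ m)
    (hpos : ∀ i, 0 < s (i + 1)) (hstep : ∀ i, s (i + 1) ≤ s i + (k - 1))
    (hbound : ∀ i < m, s i + k ≤ n) (hcover : n ≤ s (m - 1) + k)
    (hG : ∀ i < m, consecutiveCycle k (s i) ∈ G) : G = ⊤ := by
  have hn : 2 * k - 1 ≤ n := by have := hbound 1 hm; omega
  have hchain : ∀ i < m, ∀ v : Fin n, (v : ℕ) < s i + k → swap 0 v ∈ G := by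
    intro i
    induction i with
    | zero =>
      intro _ v hv
      exact swap_zero_mem_of_lt hk hkeven hn (hs0 ▸ hG 0 (by omega)) (hs1 ▸ hG 1 hm) (by omega)
    | succ i ih =>
      intro hi v hv
      by_cases hvi : (v : ℕ) < s i + k
      · exact ih (by omega) v hvi
      have hb := hbound (i + 1) hi
      have hsi := hstep i
      have hmem := fun z : Fin n => mem_support_consecutiveCycle (a := s (i + 1)) (x := z) hk hb
      obtain ⟨a, ha⟩ : ∃ a : Fin n, (a : ℕ) = s (i + 1) := ⟨⟨s (i + 1), by omega⟩, rfl⟩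
      have ha' : a ∈ (consecutiveCycle k (s (i + 1))).support := (hmem a).2 (by omega)
      have hv' : v ∈ (consecutiveCycle k (s (i + 1))).support := (hmem v).2 (by omega)
      have h0 : consecutiveCycle k (s (i + 1)) 0 = 0 := notMem_support.1 fun h => by
        have := ((hmem 0).1 h).1; rw [Fin.val_zero] at this; exact absurd (hpos i) (by omega)
      exact swap_mem_of_sameCycle (hG _ hi) h0 (ih (by omega) a (by omega))
        ((isCycle_consecutiveCycle hk hb).sameCycle (mem_support.1 ha') (mem_support.1 hv'))
  have hall : ∀ v : Fin n, swap 0 v ∈ G := fun v => hchain (m - 1) (by omega) v (by omega)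
  rw [eq_top_iff, ← closure_isSwap, closure_le]
  rintro _ ⟨x, y, -, rfl⟩
  exact SubmonoidClass.swap_mem_trans G (swap_comm x 0 ▸ hall x) (hall y)

theorem exists_cycles_closure_eq_top_card_le (hk : 2 ≤ k) (hkeven : Even k)
    (hn : 2 * k - 1 ≤ n) : ∃ T : Finset (Perm (Fin n)),
      (∀ g ∈ T, g.IsCycle ∧ #g.support = k) ∧ closure (T : Set (Perm (Fin n))) = ⊤ ∧
        #T ≤ (n - 1) ⌈/⌉ (k - 1) := by
  have : NeZero n := ⟨by omega⟩
  have hk1 : 0 < k - 1 := by omega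
  set m := (n - 1) ⌈/⌉ (k - 1)
  have hm : n - 1 ≤ (k - 1) * m := (ceilDiv_le_iff_le_mul hk1).1 le_rfl
  have hm2 : 2 ≤ m := by
    by_contra! h
    have := Nat.mul_le_mul_left (k - 1) (show m ≤ 1 by omega)
    omega
  have hm' : (k - 1) * (m - 1) + (k - 1) = (k - 1) * m := by
    rw [← Nat.mul_succ, Nat.succ_eq_add_one, Nat.sub_add_cancel (by omega)]
  set s : ℕ → ℕ := fun i => min (i * (k - 1)) (n - k)
  have hbound : ∀ i, s i + k ≤ n := fun i => by simp only [s]; omega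
  refine ⟨(range m).image fun i => consecutiveCycle k (s i), ?_, ?_,
    card_image_le.trans (card_range m).le⟩
  · simp only [mem_image, mem_range]
    rintro _ ⟨i, -, rfl⟩
    exact ⟨isCycle_consecutiveCycle hk (hbound i), card_support_consecutiveCycle hk (hbound i)⟩
  refine eq_top_of_consecutiveCycle_mem hk hkeven (m := m) (s := s) (by simp [s])
    (by simp only [s, one_mul]; omega) hm2 (fun i => ?_) (fun i => ?_) (fun i _ => hbound i) ?_
    fun i hi => subset_closure (mem_image_of_mem _ (mem_range.2 hi))
  · have := Nat.le_mul_of_pos_left (k - 1) (show 0 < i + 1 by omega)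
    simp only [s]; omega
  · have := Nat.succ_mul i (k - 1)
    simp only [s, Nat.succ_eq_add_one] at this ⊢; omega
  · have := Nat.mul_comm (m - 1) (k - 1)
    simp only [s]; omega

end Generation

/-- For even `k ≥ 2` and `n ≥ 2k−1`, the minimum cardinality of a
set of `k`-cycles generating `S_n` is exactly `⌈(n−1)/(k−1)⌉` (here `⌈/⌉` is
ceiling division on ℕ). -/
theorem stmt_6 (k n : ℕ) (hk : 2 ≤ k) (hkeven : Even k) (hn : 2 * k - 1 ≤ n) :
    IsLeast {c : ℕ | ∃ T : Finset (Equiv.Perm (Fin n)),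
        (∀ g ∈ T, g.IsCycle ∧ g.support.card = k) ∧
        Subgroup.closure (T : Set (Equiv.Perm (Fin n))) = ⊤ ∧
        T.card = c} ((n - 1) ⌈/⌉ (k - 1)) := by
  have hlower : ∀ T : Finset (Perm (Fin n)), (∀ g ∈ T, g.IsCycle ∧ #g.support = k) →
      closure (T : Set (Perm (Fin n))) = ⊤ → (n - 1) ⌈/⌉ (k - 1) ≤ #T := fun T hT hgen => by
    simpa using ceilDiv_le_card_of_closure_eq_top hk (fun g hg => (hT g hg).2) hgen
  obtain ⟨T, hT, hgen, hcard⟩ := exists_cycles_closure_eq_top_card_le hk hkeven hn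
  exact ⟨⟨T, hT, hgen, le_antisymm hcard (hlower T hT hgen)⟩,
    fun c ⟨T, hT, hgen, hc⟩ => hc ▸ hlower T hT hgen⟩
end

section
/- Let S ⊆ {1, …, N} and let c = (a_1 a_2 … a_m) be a cycle of length m ≥ 2 in S_N with support C = {a_1, …, a_m}, such that S ∩ C ≠ ∅ and |S ∩ C| ≤ |S| − 2. If m is odd, then the subgroup of S_N generated by the subalternating group on S together with c equals the subalternating group on S ∪ C. If m is even, then this subgroup equals the subsymmetric group on S ∪ C. -/
open Equiv Equiv.Perm

lemma aux_ident {α : Type*} [DecidableEq α] {x y u v : α} (hxy : x ≠ y) (hxu : x ≠ u)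
    (hxv : x ≠ v) (hyu : y ≠ u) (hyv : y ≠ v) (huv : u ≠ v) :
    swap x y * swap u v =
      (swap x u * swap u v) * ((swap y u * swap u v) * ((swap y u * swap u v) *
        (swap x u * swap u v))) := by
  have h1 := hxy.symm; have h2 := hxu.symm; have h3 := hxv.symm
  have h4 := hyu.symm; have h5 := hyv.symm; have h6 := huv.symm
  ext z
  simp only [mul_apply]
  by_cases hzx : z = x
  · subst hzx
    simp [swap_apply_of_ne_of_ne, swap_apply_left, swap_apply_right, *]
  by_cases hzy : z = y
  · subst hzy
    simp [swap_apply_of_ne_of_ne, swap_apply_left, swap_apply_right, *]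
  by_cases hzu : z = u
  · subst hzu
    simp [swap_apply_of_ne_of_ne, swap_apply_left, swap_apply_right, *]
  by_cases hzv : z = v
  · subst hzv
    simp [swap_apply_of_ne_of_ne, swap_apply_left, swap_apply_right, *]
  · simp [swap_apply_of_ne_of_ne, *]

lemma aux_sq {α : Type*} [DecidableEq α] {x u v : α} (hxu : x ≠ u) (hxv : x ≠ v)
    (huv : u ≠ v) :
    swap x v * swap u v = (swap x u * swap u v) * (swap x u * swap u v) := by
  have h2 := hxu.symm; have h3 := hxv.symm; have h6 := huv.symm
  ext z
  simp only [mul_apply]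
  by_cases hzx : z = x
  · subst hzx
    simp [swap_apply_of_ne_of_ne, swap_apply_left, swap_apply_right, *]
  by_cases hzu : z = u
  · subst hzu
    simp [swap_apply_of_ne_of_ne, swap_apply_left, swap_apply_right, *]
  by_cases hzv : z = v
  · subst hzv
    simp [swap_apply_of_ne_of_ne, swap_apply_left, swap_apply_right, *]
  · simp [swap_apply_of_ne_of_ne, *]

/-- Let `S ⊆ {1,…,N}` and `c` a cycle of length `m ≥ 2` in `S_N`
with support `C`, such that `S ∩ C ≠ ∅` and `|S ∩ C| ≤ |S| − 2` (stated as
`|S ∩ C| + 2 ≤ |S|`). If `m` is odd then the subgroup generated by the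
subalternating group on `S` together with `c` is exactly the subalternating
group on `S ∪ C`; if `m` is even it is exactly the subsymmetric group on
`S ∪ C`. -/
theorem stmt_10 (N : ℕ) (S : Finset (Fin N)) (c : Equiv.Perm (Fin N)) (m : ℕ) (hm : 2 ≤ m)
    (hc : c.IsCycle) (hsupp : c.support.card = m)
    (hinter : (S ∩ c.support).Nonempty) (hsize : (S ∩ c.support).card + 2 ≤ S.card) :
    (Odd m → ∀ g : Equiv.Perm (Fin N),
      g ∈ Subgroup.closure
          ({g : Equiv.Perm (Fin N) | g ∈ alternatingGroup (Fin N) ∧ ∀ x ∉ S, g x = x} ∪ {c}) ↔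
        (g ∈ alternatingGroup (Fin N) ∧ ∀ x, x ∉ S ∪ c.support → g x = x)) ∧
    (Even m → ∀ g : Equiv.Perm (Fin N),
      g ∈ Subgroup.closure
          ({g : Equiv.Perm (Fin N) | g ∈ alternatingGroup (Fin N) ∧ ∀ x ∉ S, g x = x} ∪ {c}) ↔
        ∀ x, x ∉ S ∪ c.support → g x = x) := by
  classical
  set T : Finset (Fin N) := S ∪ c.support with hT
  set H : Subgroup (Equiv.Perm (Fin N)) := Subgroup.closure
      ({g : Equiv.Perm (Fin N) | g ∈ alternatingGroup (Fin N) ∧ ∀ x ∉ S, g x = x} ∪ {c})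
      with hHdef
  obtain ⟨a, ha⟩ := hinter
  rw [Finset.mem_inter] at ha
  have huv2 : 1 < (S \ c.support).card := by
    have := Finset.card_sdiff_add_card_inter S c.support
    omega
  obtain ⟨u, hu, v, hv, huv⟩ := Finset.one_lt_card.mp huv2
  rw [Finset.mem_sdiff] at hu hv
  have hau : a ≠ u := fun h => hu.2 (h ▸ ha.2)
  have hav : a ≠ v := fun h => hv.2 (h ▸ ha.2)
  have hcH : c ∈ H := Subgroup.subset_closure (Or.inr rfl)
  -- products of two swaps with endpoints in S lie in H
  have hpairS : ∀ p q r s : Fin N, p ∈ S → q ∈ S → r ∈ S → s ∈ S → p ≠ q → r ≠ s →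
      swap p q * swap r s ∈ H := by
    intro p q r s hp hq hr hs hpq hrs
    refine Subgroup.subset_closure (Or.inl ⟨mem_alternatingGroup.mpr ?_, ?_⟩)
    · simp [sign_swap hpq, sign_swap hrs]
    · intro x hx
      have hxp : x ≠ p := fun h => hx (h ▸ hp)
      have hxq : x ≠ q := fun h => hx (h ▸ hq)
      have hxr : x ≠ r := fun h => hx (h ▸ hr)
      have hxs : x ≠ s := fun h => hx (h ▸ hs)
      rw [Equiv.Perm.mul_apply, swap_apply_of_ne_of_ne hxr hxs,
        swap_apply_of_ne_of_ne hxp hxq]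
  -- the three-cycles (x u v) lie in H for x ∈ T
  have hstep : ∀ x ∈ T, x ≠ u → x ≠ v → swap x u * swap u v ∈ H := by
    intro x hxT hxu hxv
    by_cases hxS : x ∈ S
    · exact hpairS x u u v hxS hu.1 hu.1 hv.1 hxu huv
    · have hxC : x ∈ c.support := by
        rcases Finset.mem_union.mp hxT with h | h
        · exact absurd h hxS
        · exact h
      have hca : c a ≠ a := Equiv.Perm.mem_support.mp ha.2
      have hcx : c x ≠ x := Equiv.Perm.mem_support.mp hxC
      obtain ⟨k, hk⟩ := hc.exists_zpow_eq hca hcx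
      have hku : (c ^ k) u = u := by
        have : u ∉ (c ^ k).support := fun h => hu.2 (Equiv.Perm.support_zpow_le c k h)
        exact Equiv.Perm.notMem_support.mp this
      have hkv : (c ^ k) v = v := by
        have : v ∉ (c ^ k).support := fun h => hv.2 (Equiv.Perm.support_zpow_le c k h)
        exact Equiv.Perm.notMem_support.mp this
      have e1 := Equiv.swap_apply_apply (c ^ k) a u
      rw [hk, hku] at e1
      have e2 := Equiv.swap_apply_apply (c ^ k) u v
      rw [hku, hkv] at e2
      have key : swap x u * swap u v = (c ^ k) * ((swap a u * swap u v) * (c ^ k)⁻¹) := by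
        conv_lhs => rw [e1, e2]
        group
      rw [key]
      exact H.mul_mem (H.zpow_mem hcH k)
        (H.mul_mem (hpairS a u u v ha.1 hu.1 hu.1 hv.1 hau huv) (H.inv_mem (H.zpow_mem hcH k)))
  -- swap x y * swap u v ∈ H for distinct x, y ∈ T, x ∉ S
  have E1 : ∀ x ∈ T, x ∉ S → ∀ y ∈ T, x ≠ y → swap x y * swap u v ∈ H := by
    intro x hxT hxS y hyT hxy
    have hxu : x ≠ u := fun h => hxS (h ▸ hu.1)
    have hxv : x ≠ v := fun h => hxS (h ▸ hv.1)
    by_cases hyu : y = u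
    · subst hyu; exact hstep x hxT hxu hxv
    by_cases hyv : y = v
    · subst hyv
      rw [aux_sq hxu hxv huv]
      exact H.mul_mem (hstep x hxT hxu hxv) (hstep x hxT hxu hxv)
    · rw [aux_ident hxy hxu hxv hyu hyv huv]
      exact H.mul_mem (hstep x hxT hxu hxv)
        (H.mul_mem (hstep y hyT hyu hyv)
          (H.mul_mem (hstep y hyT hyu hyv) (hstep x hxT hxu hxv)))
  have E : ∀ x ∈ T, ∀ y ∈ T, x ≠ y → swap x y * swap u v ∈ H := by
    intro x hxT y hyT hxy
    by_cases hxS : x ∈ S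
    · by_cases hyS : y ∈ S
      · exact hpairS x y u v hxS hyS hu.1 hv.1 hxy huv
      · rw [Equiv.swap_comm x y]; exact E1 y hyT hyS x hxT hxy.symm
    · exact E1 x hxT hxS y hyT hxy
  -- arbitrary products of two swaps in T
  have pairE : ∀ p ∈ T, ∀ q ∈ T, ∀ r ∈ T, ∀ s ∈ T, p ≠ q → r ≠ s →
      swap p q * swap r s ∈ H := by
    intro p hp q hq r hr s hs hpq hrs
    have key : swap p q * swap r s = (swap p q * swap u v) * (swap r s * swap u v)⁻¹ := by
      rw [mul_inv_rev, Equiv.swap_inv, Equiv.swap_inv, mul_assoc,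
        ← mul_assoc (swap u v) (swap u v), Equiv.swap_mul_self, one_mul]
    rw [key]
    exact H.mul_mem (E p hp q hq hpq) (H.inv_mem (E r hr s hs hrs))
  -- every even permutation supported in T lies in H
  have main : ∀ n : ℕ, ∀ g : Equiv.Perm (Fin N), g.support.card ≤ n → g.support ⊆ T →
      Equiv.Perm.sign g = 1 → g ∈ H := by
    intro n
    induction n using Nat.strong_induction_on with
    | _ n ih =>
      intro g hcard hsub hsign
      by_cases hgone : g = 1
      · subst hgone; exact H.one_mem
      obtain ⟨x, hx⟩ : ∃ x, g x ≠ x := by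
        by_contra h; push_neg at h; exact hgone (Equiv.ext h)
      have hxT : x ∈ T := hsub (Equiv.Perm.mem_support.mpr hx)
      have hgxT : g x ∈ T := hsub (Equiv.Perm.apply_mem_support.mpr (Equiv.Perm.mem_support.mpr hx))
      set g1 : Equiv.Perm (Fin N) := swap x (g x) * g with hg1def
      have hcard1 : g1.support.card < g.support.card := Equiv.Perm.card_support_swap_mul hx
      have hsub1 : g1.support ⊆ T := by
        refine (Equiv.Perm.support_mul_le _ _).trans ?_
        intro z hz
        rcases Finset.mem_union.mp hz with h | h
        · rw [Equiv.Perm.support_swap (Ne.symm hx)] at h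
          rcases Finset.mem_insert.mp h with h | h
          · exact h ▸ hxT
          · rw [Finset.mem_singleton.mp h]; exact hgxT
        · exact hsub h
      have hsign1 : Equiv.Perm.sign g1 = -1 := by
        rw [hg1def, map_mul, sign_swap (Ne.symm hx), hsign]; decide
      have hg1ne : g1 ≠ 1 := by
        intro h; rw [h, map_one] at hsign1; exact absurd hsign1 (by decide)
      obtain ⟨y, hy⟩ : ∃ y, g1 y ≠ y := by
        by_contra h; push_neg at h; exact hg1ne (Equiv.ext h)
      have hyT : y ∈ T := hsub1 (Equiv.Perm.mem_support.mpr hy)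
      have hg1yT : g1 y ∈ T :=
        hsub1 (Equiv.Perm.apply_mem_support.mpr (Equiv.Perm.mem_support.mpr hy))
      set g2 : Equiv.Perm (Fin N) := swap y (g1 y) * g1 with hg2def
      have hcard2 : g2.support.card < g1.support.card := Equiv.Perm.card_support_swap_mul hy
      have hsub2 : g2.support ⊆ T := by
        refine (Equiv.Perm.support_mul_le _ _).trans ?_
        intro z hz
        rcases Finset.mem_union.mp hz with h | h
        · rw [Equiv.Perm.support_swap (Ne.symm hy)] at h
          rcases Finset.mem_insert.mp h with h | h
          · exact h ▸ hyT
          · rw [Finset.mem_singleton.mp h]; exact hg1yT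
        · exact hsub1 h
      have hsign2 : Equiv.Perm.sign g2 = 1 := by
        rw [hg2def, map_mul, sign_swap (Ne.symm hy), hsign1]; decide
      have hg2H : g2 ∈ H :=
        ih g2.support.card (lt_of_lt_of_le (hcard2.trans hcard1) hcard) g2 le_rfl hsub2 hsign2
      have key : g = (swap x (g x) * swap y (g1 y)) * g2 := by
        rw [hg2def, hg1def]
        simp only [mul_assoc, Equiv.swap_mul_self_mul]
      rw [key]
      exact H.mul_mem (pairE x hxT (g x) hgxT y hyT (g1 y) hg1yT (Ne.symm hx) (Ne.symm hy)) hg2H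
  -- sign of c
  have hsignc : Equiv.Perm.sign c = -(-1) ^ m := by rw [← hsupp]; exact hc.sign
  -- forward direction: elements of H fix everything outside T, and are even if m is odd
  have fwd : ∀ g ∈ H, (∀ x ∉ T, g x = x) ∧ (Odd m → g ∈ alternatingGroup (Fin N)) := by
    intro g hg
    refine Subgroup.closure_induction
      (p := fun g _ => (∀ x ∉ T, g x = x) ∧ (Odd m → g ∈ alternatingGroup (Fin N)))
      ?_ ?_ ?_ ?_ hg
    · rintro w (⟨hw1, hw2⟩ | rfl)
      · exact ⟨fun x hxT => hw2 x (fun h => hxT (Finset.mem_union_left _ h)), fun _ => hw1⟩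
      · refine ⟨fun x hxT => ?_, fun hodd => ?_⟩
        · exact Equiv.Perm.notMem_support.mp (fun h => hxT (Finset.mem_union_right _ h))
        · rw [mem_alternatingGroup, hsignc, Odd.neg_one_pow hodd]; decide
    · exact ⟨fun x _ => rfl, fun _ => Subgroup.one_mem _⟩
    · rintro w w' _ _ ⟨hw1, hw2⟩ ⟨hw1', hw2'⟩
      refine ⟨fun x hxT => ?_, fun hodd => Subgroup.mul_mem _ (hw2 hodd) (hw2' hodd)⟩
      rw [Equiv.Perm.mul_apply, hw1' x hxT, hw1 x hxT]
    · rintro w _ ⟨hw1, hw2⟩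
      refine ⟨fun x hxT => ?_, fun hodd => Subgroup.inv_mem _ (hw2 hodd)⟩
      exact Equiv.Perm.inv_eq_iff_eq.mpr (hw1 x hxT).symm
  constructor
  · intro hodd g
    constructor
    · intro hg
      exact ⟨(fwd g hg).2 hodd, (fwd g hg).1⟩
    · rintro ⟨hgA, hgfix⟩
      refine main g.support.card g le_rfl ?_ (mem_alternatingGroup.mp hgA)
      intro x hx
      by_contra hxT
      exact (Equiv.Perm.mem_support.mp hx) (hgfix x hxT)
  · intro heven g
    constructor
    · intro hg; exact (fwd g hg).1
    · intro hgfix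
      have hsub : g.support ⊆ T := by
        intro x hx
        by_contra hxT
        exact (Equiv.Perm.mem_support.mp hx) (hgfix x hxT)
      rcases Int.units_eq_one_or (Equiv.Perm.sign g) with h1 | h1
      · exact main g.support.card g le_rfl hsub h1
      · have hsc : Equiv.Perm.sign c = -1 := by
          rw [hsignc, Even.neg_one_pow heven]
        have hg' : g * c⁻¹ ∈ H := by
          refine main (g * c⁻¹).support.card _ le_rfl ?_ ?_
          · refine (Equiv.Perm.support_mul_le _ _).trans ?_
            intro z hz
            rcases Finset.mem_union.mp hz with h | h
            · exact hsub h
            · rw [Equiv.Perm.support_inv] at h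
              exact Finset.mem_union_right _ h
          · rw [map_mul, map_inv, h1, hsc]; decide
        have key : g = (g * c⁻¹) * c := by group
        rw [key]
        exact H.mul_mem hg' hcH
end

section
/- Let A be a nonempty multiset of integers each ≥ 2, let k ≥ 1, and let B be the multiset consisting of k copies of A (so B = A + A + … + A, k times, as a multiset sum). If T is a subset of the extended conjugacy class C(B) in S_n that generates S_n, then there exists a subset T' of the extended conjugacy class C(A) in S_n that generates S_n with |T'| ≤ k·|T|. -/
/-!
Group the disjoint cycles of a generator `g` of cycle type `k • A` into `k` blocks of cycle type `A`;
the products of the blocks are `k` permutations of type `A` whose product is `g`. Replacing every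
generator by its `k` factors gives a generating set of type `A` at most `k` times as large.
-/

open Equiv

namespace Equiv.Perm

variable {α : Type*} [Fintype α] [DecidableEq α]

theorem exists_disjoint_mul_eq_of_cycleType_eq_add (σ : Perm α) :
    ∀ A B : Multiset ℕ, σ.cycleType = A + B →
      ∃ τ ρ : Perm α, Disjoint τ ρ ∧ τ * ρ = σ ∧ τ.cycleType = A ∧ ρ.cycleType = B := by
  induction σ using cycle_induction_on with
  | base_one =>
    intro A B h
    obtain ⟨rfl, rfl⟩ := add_eq_zero.mp (cycleType_one.symm.trans h).symm
    exact ⟨1, 1, disjoint_one_left 1, mul_one 1, cycleType_one, cycleType_one⟩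
  | base_cycles σ hσ =>
    intro A B h
    rw [hσ.cycleType] at h
    have hcard : A.card + B.card = 1 := by simpa using (congrArg Multiset.card h).symm
    rcases Nat.add_eq_one_iff.mp hcard with ⟨hA, -⟩ | ⟨-, hB⟩
    · obtain rfl := Multiset.card_eq_zero.mp hA
      rw [zero_add] at h
      exact ⟨1, σ, disjoint_one_left σ, one_mul σ, cycleType_one, h ▸ hσ.cycleType⟩
    · obtain rfl := Multiset.card_eq_zero.mp hB
      rw [add_zero] at h
      exact ⟨σ, 1, disjoint_one_right σ, mul_one σ, h ▸ hσ.cycleType, cycleType_one⟩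
  | induction_disjoint σ τ hστ hσ _ ih =>
    intro A B h
    rw [hστ.cycleType_mul, hσ.cycleType] at h
    wlog hA : σ.support.card ∈ A generalizing A B
    · have hB : σ.support.card ∈ B := by
        have hAB : σ.support.card ∈ A + B :=
          h ▸ Multiset.mem_add.mpr (Or.inl (Multiset.mem_singleton_self _))
        exact (Multiset.mem_add.mp hAB).resolve_left hA
      obtain ⟨ρ, τ', hd, hmul, hρ, hτ'⟩ := this B A (h.trans (add_comm A B)) hB
      exact ⟨τ', ρ, hd.symm, hd.commute.symm.eq.trans hmul, hτ', hρ⟩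
    obtain ⟨A', rfl⟩ := Multiset.exists_cons_of_mem hA
    rw [Multiset.cons_add, ← Multiset.singleton_add, add_right_inj] at h
    obtain ⟨τ₀, ρ, hd, rfl, hτ₀, hρ⟩ := ih A' B h
    have hστ₀ : Disjoint σ τ₀ := hστ.mono le_rfl (hd.support_mul ▸ Finset.subset_union_left)
    have hσρ : Disjoint σ ρ := hστ.mono le_rfl (hd.support_mul ▸ Finset.subset_union_right)
    refine ⟨σ * τ₀, ρ, hσρ.mul_left hd, (mul_assoc _ _ _).symm, ?_, hρ⟩
    rw [hστ₀.cycleType_mul, hσ.cycleType, hτ₀, Multiset.singleton_add]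

theorem exists_list_prod_eq_of_cycleType_eq_nsmul (A : Multiset ℕ) (k : ℕ) :
    ∀ σ : Perm α, σ.cycleType = k • A →
      ∃ l : List (Perm α), l.length = k ∧ (∀ τ ∈ l, τ.cycleType = A) ∧ l.prod = σ := by
  induction k with
  | zero =>
    intro σ h
    rw [zero_smul, cycleType_eq_zero] at h
    exact ⟨[], rfl, by simp, h.symm⟩
  | succ k ih =>
    intro σ h
    rw [succ_nsmul'] at h
    obtain ⟨τ, ρ, -, rfl, hτ, hρ⟩ := exists_disjoint_mul_eq_of_cycleType_eq_add σ A (k • A) h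
    obtain ⟨l, hlen, hl, rfl⟩ := ih ρ hρ
    refine ⟨τ :: l, by simp [hlen], ?_, List.prod_cons⟩
    simpa [hτ] using hl

end Equiv.Perm

theorem stmt_13_general (n : ℕ) (A : Multiset ℕ)
    (k : ℕ)
    (T : Finset (Equiv.Perm (Fin n))) (hT : ∀ g ∈ T, g.cycleType = k • A)
    (hgen : Subgroup.closure (T : Set (Equiv.Perm (Fin n))) = ⊤) :
    ∃ T' : Finset (Equiv.Perm (Fin n)),
      (∀ g ∈ T', g.cycleType = A) ∧
      Subgroup.closure (T' : Set (Equiv.Perm (Fin n))) = ⊤ ∧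
      T'.card ≤ k * T.card := by
  choose l hlen hlA hprod using fun g (hg : g ∈ T) =>
    Perm.exists_list_prod_eq_of_cycleType_eq_nsmul A k g (hT g hg)
  set T' := T.attach.biUnion fun g => (l g.1 g.2).toFinset
  have mem_T' {g : Perm (Fin n)} (hg : g ∈ T) {τ : Perm (Fin n)} (hτ : τ ∈ l g hg) : τ ∈ T' :=
    Finset.mem_biUnion.mpr ⟨⟨g, hg⟩, Finset.mem_attach _ _, List.mem_toFinset.mpr hτ⟩
  refine ⟨T', ?_, ?_, ?_⟩
  · simp only [T', Finset.mem_biUnion, List.mem_toFinset]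
    rintro τ ⟨g, -, hτ⟩
    exact hlA g.1 g.2 τ hτ
  · rw [eq_top_iff, ← hgen, Subgroup.closure_le]
    intro g hg
    rw [← hprod g hg]
    exact Subgroup.list_prod_mem _ fun τ hτ => Subgroup.subset_closure (mem_T' hg hτ)
  · calc T'.card ≤ ∑ g ∈ T.attach, (l g.1 g.2).toFinset.card := Finset.card_biUnion_le
      _ ≤ ∑ _g ∈ T.attach, k :=
        Finset.sum_le_sum fun g _ => (List.toFinset_card_le _).trans (hlen g.1 g.2).le
      _ = k * T.card := by simp [mul_comm]

/-- Let `A` be a nonempty multiset of integers `≥ 2`, `k ≥ 1`, and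
`B = k • A` the multiset sum of `k` copies of `A`. If `T ⊆ C(B)` generates
`S_n`, then there is `T' ⊆ C(A)` generating `S_n` with `|T'| ≤ k·|T|`. -/
theorem stmt_13 (n : ℕ) (A : Multiset ℕ) (hA : A ≠ 0) (hA2 : ∀ a ∈ A, 2 ≤ a)
    (k : ℕ) (hk : 1 ≤ k)
    (T : Finset (Equiv.Perm (Fin n))) (hT : ∀ g ∈ T, g.cycleType = k • A)
    (hgen : Subgroup.closure (T : Set (Equiv.Perm (Fin n))) = ⊤) :
    ∃ T' : Finset (Equiv.Perm (Fin n)),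
      (∀ g ∈ T', g.cycleType = A) ∧
      Subgroup.closure (T' : Set (Equiv.Perm (Fin n))) = ⊤ ∧
      T'.card ≤ k * T.card :=
  stmt_13_general n A k T hT hgen
end

section
/- Let k ≥ 2 and let T ⊆ S_n be a split set of k-cycles (the supports of any two distinct elements of T intersect in at most one point), and let t_1, t_2 be distinct elements of T. Then in the Cayley graph Cay(S_n, T) there exists a unique vertex x different from the identity that is adjacent to both t_1 and t_2 (equivalently, a unique 4-cycle containing the path t_2 → identity → t_1) if and only if t_1t_2 = t_2t_1; moreover, when t_1 and t_2 commute, this unique common neighbor is x = t_1t_2, giving the 4-cycle identity → t_1 → t_1t_2 → t_2 → identity. -/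
/-!
A common neighbour `x ≠ 1` of `t₁` and `t₂` is `x = u * t₁ = v * t₂` with `u, v ∈ T ∪ T⁻¹`, so
`u⁻¹ * v = t₁ * t₂⁻¹`. Supports of permutations meeting in at most one point add up under
multiplication; since `u` and `v` cannot come from the same element of `T` (its support would then
contain `supp t₁ ∪ supp t₂`), splitness gives `supp u ∪ supp v = supp t₁ ∪ supp t₂`.

If `t₁` and `t₂` commute, their supports are disjoint, so are those of `u` and `v` by counting, and
uniqueness of the decomposition into disjoint cycles leaves only `x = t₂ * t₁ = t₁ * t₂`.

Otherwise the supports share exactly one point. For `k ≥ 3` the only members of `T` supported in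
`supp t₁ ∪ supp t₂` are `t₁` and `t₂`; then `t₁ * t₁ = t₂ * t₂` would be supported in one point, and
the mixed cases fail when evaluated at a `z ∈ supp t₁` with `z, t₁ z ∉ supp t₂`: no common
neighbour exists. For `k = 2` everything is a transposition of three points `p, q₁, q₂`, and a common neighbour
forces `swap q₁ q₂ = t₁ * t₂ * t₁⁻¹ = t₂ * t₁ * t₂⁻¹` into `T`, making both `t₁ * t₂ ≠ t₂ * t₁`
common neighbours.
-/

def cayleyGraph (G : Type*) [Group G] (S : Set G) : SimpleGraph G where
  Adj g h := g ≠ h ∧ (g * h⁻¹ ∈ S ∨ h * g⁻¹ ∈ S)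
  symm := ⟨fun g h ⟨hne, hmem⟩ => ⟨hne.symm, hmem.symm⟩⟩
  loopless := ⟨fun g hg => hg.1 rfl⟩

open Equiv Equiv.Perm Finset Pointwise

section Cayley

variable {G : Type*} [Group G] {S : Set G}

theorem cayleyGraph_adj_iff {g h : G} :
    (cayleyGraph G S).Adj g h ↔ g ≠ h ∧ h * g⁻¹ ∈ S ∪ S⁻¹ := by
  simp only [cayleyGraph, Set.mem_union, Set.mem_inv, mul_inv_rev, inv_inv, or_comm]

theorem cayleyGraph_adj_mul_left {s : G} (hs : s ∈ S) (hs₁ : s ≠ 1) (g : G) :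
    (cayleyGraph G S).Adj g (s * g) :=
  ⟨fun h => hs₁ (by simpa using h.symm), Or.inr (by simpa using hs)⟩

end Cayley

namespace Equiv.Perm

theorem IsSwap.inv_eq {α : Type*} [DecidableEq α] {σ : Perm α} (h : σ.IsSwap) : σ⁻¹ = σ := by
  obtain ⟨x, y, -, rfl⟩ := h
  exact swap_inv x y

variable {α : Type*} [DecidableEq α] [Fintype α]

theorem IsSwap.exists_eq_swap_of_mem_support {σ : Perm α} (h : σ.IsSwap) {p : α}
    (hp : p ∈ σ.support) : ∃ q, q ≠ p ∧ σ = swap p q := by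
  obtain ⟨x, y, hxy, rfl⟩ := h
  rw [support_swap hxy, mem_insert, mem_singleton] at hp
  rcases hp with rfl | rfl
  exacts [⟨y, hxy.symm, rfl⟩, ⟨x, hxy, swap_comm x p⟩]

theorem IsSwap.eq_swap_of_support_subset {σ : Perm α} (h : σ.IsSwap) {p q r : α}
    (hσ : σ.support ⊆ {p, q, r}) : σ = swap p q ∨ σ = swap p r ∨ σ = swap q r := by
  obtain ⟨x, y, hxy, rfl⟩ := h
  simp only [support_swap hxy, insert_subset_iff, singleton_subset_iff, mem_insert,
    mem_singleton] at hσ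
  obtain ⟨hx | hx | hx, hy | hy | hy⟩ := hσ <;> subst hx hy <;> simp_all [swap_comm]

theorem disjoint_of_commute_of_card_support_inter_le_one {σ τ : Perm α} (h : Commute σ τ)
    (hστ : #(σ.support ∩ τ.support) ≤ 1) : σ.Disjoint τ := by
  rw [disjoint_iff_disjoint_support, Finset.disjoint_left]
  intro z hσ hτ
  have hσz : σ z ∈ σ.support ∩ τ.support :=
    mem_inter.2 ⟨apply_mem_support.2 hσ, (mem_support_iff_of_commute h z).2 hτ⟩
  exact mem_support.1 hσ (card_le_one.1 hστ _ hσz z (mem_inter.2 ⟨hσ, hτ⟩))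

theorem support_mul_of_card_support_inter_le_one {σ τ : Perm α}
    (hστ : #(σ.support ∩ τ.support) ≤ 1) : (σ * τ).support = σ.support ∪ τ.support := by
  refine (support_mul_le σ τ).antisymm fun z hz => mem_support.2 fun hfix => ?_
  rw [mul_apply] at hfix
  have hτz : τ z ≠ z := by
    intro hτ
    rw [hτ] at hfix
    rcases mem_union.1 hz with h | h
    exacts [mem_support.1 h hfix, mem_support.1 h hτ]
  have hτzσ : τ z ∈ σ.support := mem_support.2 (by rw [hfix]; exact hτz.symm)
  have hzσ : z ∈ σ.support := hfix ▸ apply_mem_support.2 hτzσ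
  exact hτz (card_le_one.1 hστ _ (mem_inter.2 ⟨hτzσ, apply_mem_support.2 (mem_support.2 hτz)⟩)
    z (mem_inter.2 ⟨hzσ, mem_support.2 hτz⟩))

theorem IsCycle.apply_apply_ne {σ : Perm α} (hσ : σ.IsCycle) (h3 : 3 ≤ #σ.support) {z : α}
    (hz : z ∈ σ.support) : σ (σ z) ≠ z := by
  intro h
  have hsq : σ ^ 2 = 1 := hσ.pow_eq_one_iff.2 ⟨z, mem_support.1 hz, by simpa [sq] using h⟩
  have := Nat.le_of_dvd two_pos (hσ.orderOf ▸ orderOf_dvd_of_pow_eq_one hsq)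
  omega

theorem exists_mem_support_notMem_of_card_inter_le_one (σ : Perm α) {s : Finset α}
    (h3 : 3 ≤ #σ.support) (hs : #(σ.support ∩ s) ≤ 1) :
    ∃ z ∈ σ.support, z ∉ s ∧ σ z ∉ s := by
  set B := σ.support ∩ s
  obtain ⟨z, hz, hzB⟩ : ∃ z ∈ σ.support, z ∉ B ∪ B.image σ.symm := by
    refine exists_mem_notMem_of_card_lt_card ?_
    have := card_union_le B (B.image σ.symm)
    have := card_image_le (s := B) (f := σ.symm)
    omega
  refine ⟨z, hz, fun hzs => hzB (mem_union_left _ (mem_inter.2 ⟨hz, hzs⟩)), fun hzs => hzB ?_⟩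
  exact mem_union_right _ (mem_image.2 ⟨σ z, mem_inter.2 ⟨apply_mem_support.2 hz, hzs⟩, by simp⟩)

theorem mul_ne_inv_mul {c d e : Perm α} (hc : c.IsCycle) (h3 : 3 ≤ #c.support)
    (hcd : #(c.support ∩ d.support) ≤ 1) (he : e.support ⊆ d.support) : e * c ≠ c⁻¹ * d := by
  obtain ⟨z, hz, hzd, hczd⟩ := c.exists_mem_support_notMem_of_card_inter_le_one h3 hcd
  intro h
  have hz' := DFunLike.congr_fun h z
  simp only [mul_apply, notMem_support.1 hzd, notMem_support.1 fun h' => hczd (he h')] at hz'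
  exact hc.apply_apply_ne h3 hz (by rw [hz']; simp)

theorem mul_self_eq_one_of_mul_self_eq {σ τ : Perm α} (h : σ * σ = τ * τ)
    (hστ : #(σ.support ∩ τ.support) ≤ 1) : σ * σ = 1 := by
  refine card_support_le_one.1 ((card_le_card (subset_inter ?_ ?_)).trans hστ)
  · simpa using support_mul_le σ σ
  · simpa [h] using support_mul_le τ τ

theorem IsCycle.eq_or_eq_of_mul_eq_mul {f g f' g' : Perm α} (hf : f.IsCycle) (hfg : f.Disjoint g)
    (hf' : f'.IsCycle) (hg' : g'.IsCycle) (hfg' : f'.Disjoint g') (h : f * g = f' * g') :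
    f = f' ∨ f = g' := by
  have hmem : f ∈ (f * g).cycleFactorsFinset := by
    rw [hfg.cycleFactorsFinset_mul_eq_union, hf.cycleFactorsFinset_eq_singleton]
    exact mem_union_left _ (mem_singleton_self f)
  rw [h, hfg'.cycleFactorsFinset_mul_eq_union, hf'.cycleFactorsFinset_eq_singleton,
    hg'.cycleFactorsFinset_eq_singleton] at hmem
  simpa using hmem

end Equiv.Perm

theorem isCycle_and_card_support_of_mem_union_inv {α : Type*} [DecidableEq α] [Fintype α]
    {T : Set (Perm α)} {k : ℕ} (hcyc : ∀ t ∈ T, t.IsCycle ∧ #t.support = k) {u : Perm α}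
    (hu : u ∈ T ∪ T⁻¹) : u.IsCycle ∧ #u.support = k := by
  rcases hu with hu | hu
  · exact hcyc u hu
  · simpa [support_inv] using hcyc _ hu

def IsSplit {α : Type*} [DecidableEq α] [Fintype α] (T : Set (Perm α)) : Prop :=
  ∀ g ∈ T, ∀ h ∈ T, g ≠ h → #(g.support ∩ h.support) ≤ 1

namespace IsSplit

variable {α : Type*} [DecidableEq α] [Fintype α] {T : Set (Perm α)}

theorem card_support_inter_le_one (hT : IsSplit T) {u v : Perm α} (hu : u ∈ T ∪ T⁻¹)
    (hv : v ∈ T ∪ T⁻¹) (huv : u.support ≠ v.support) : #(u.support ∩ v.support) ≤ 1 := by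
  have key : ∀ w ∈ T ∪ T⁻¹, ∃ a ∈ T, a.support = w.support := by
    rintro w (hw | hw)
    exacts [⟨w, hw, rfl⟩, ⟨w⁻¹, hw, support_inv w⟩]
  obtain ⟨a, ha, hau⟩ := key u hu
  obtain ⟨b, hb, hbv⟩ := key v hv
  rw [← hau, ← hbv] at huv ⊢
  exact hT a ha b hb (by rintro rfl; exact huv rfl)

variable {k : ℕ} (hcyc : ∀ t ∈ T, t.IsCycle ∧ #t.support = k) (hT : IsSplit T)
include hcyc hT

theorem mul_ne_one {t₁ t₂ : Perm α} (ht₁ : t₁ ∈ T) (ht₂ : t₂ ∈ T) (hne : t₁ ≠ t₂) :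
    t₁ * t₂ ≠ 1 := by
  intro h
  have h₁₂ := hT t₁ ht₁ t₂ ht₂ hne
  rw [eq_inv_of_mul_eq_one_right h, support_inv, inter_self] at h₁₂
  have := (hcyc t₁ ht₁).1.two_le_card_support
  omega

theorem adj_mul_and_adj_mul {t₁ t₂ : Perm α} (ht₁ : t₁ ∈ T) (ht₂ : t₂ ∈ T) (hne : t₁ ≠ t₂)
    (hconj : t₁ * t₂ * t₁⁻¹ ∈ T) :
    t₁ * t₂ ≠ 1 ∧ (cayleyGraph (Perm α) T).Adj t₁ (t₁ * t₂) ∧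
      (cayleyGraph (Perm α) T).Adj t₂ (t₁ * t₂) :=
  ⟨hT.mul_ne_one hcyc ht₁ ht₂ hne,
    by simpa using cayleyGraph_adj_mul_left hconj (hcyc _ hconj).1.ne_one t₁,
    cayleyGraph_adj_mul_left ht₁ (hcyc t₁ ht₁).1.ne_one t₂⟩

theorem support_ne_and_support_union_eq {t₁ t₂ : Perm α} (ht₁ : t₁ ∈ T) (ht₂ : t₂ ∈ T)
    (hne : t₁ ≠ t₂) {u v : Perm α} (hu : u ∈ T ∪ T⁻¹) (hv : v ∈ T ∪ T⁻¹)
    (h : u⁻¹ * v = t₁ * t₂⁻¹) :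
    u.support ≠ v.support ∧ u.support ∪ v.support = t₁.support ∪ t₂.support := by
  have h₁₂ := hT t₁ ht₁ t₂ ht₂ hne
  have hU : (t₁ * t₂⁻¹).support = t₁.support ∪ t₂.support := by
    rw [support_mul_of_card_support_inter_le_one (by rwa [support_inv]), support_inv]
  have huv : u.support ≠ v.support := by
    intro huv
    have hsub : t₁.support ∪ t₂.support ⊆ u.support := by
      rw [← hU, ← h]
      simpa [huv] using support_mul_le u⁻¹ v
    obtain ⟨hu_cyc, hk⟩ := isCycle_and_card_support_of_mem_union_inv hcyc hu
    have e₁ : t₁.support = u.support := eq_of_subset_of_card_le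
      (subset_union_left.trans hsub) (by rw [hk, (hcyc t₁ ht₁).2])
    have e₂ : t₂.support = u.support := eq_of_subset_of_card_le
      (subset_union_right.trans hsub) (by rw [hk, (hcyc t₂ ht₂).2])
    rw [e₁, e₂, inter_self] at h₁₂
    have := hu_cyc.two_le_card_support
    omega
  refine ⟨huv, ?_⟩
  have huv₁ : #(u⁻¹.support ∩ v.support) ≤ 1 := by
    rw [support_inv]
    exact hT.card_support_inter_le_one hu hv huv
  rw [← hU, ← h, support_mul_of_card_support_inter_le_one huv₁, support_inv]


theorem eq_or_eq_inv_of_support_subset_union (hk : 3 ≤ k) {t₁ t₂ : Perm α} (ht₁ : t₁ ∈ T)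
    (ht₂ : t₂ ∈ T) {u : Perm α} (hu : u ∈ T ∪ T⁻¹) (hsub : u.support ⊆ t₁.support ∪ t₂.support) :
    u = t₁ ∨ u = t₁⁻¹ ∨ u = t₂ ∨ u = t₂⁻¹ := by
  have key : ∀ c ∈ T, c.support ⊆ t₁.support ∪ t₂.support → c = t₁ ∨ c = t₂ := by
    intro c hc hcU
    by_contra! h
    have := card_union_le (c.support ∩ t₁.support) (c.support ∩ t₂.support)
    rw [← inter_union_distrib_left, inter_eq_left.2 hcU, (hcyc c hc).2] at this
    have := hT c hc t₁ ht₁ h.1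
    have := hT c hc t₂ ht₂ h.2
    omega
  rcases hu with hu | hu
  · rcases key u hu hsub with rfl | rfl <;> simp
  · rcases key u⁻¹ hu (by rwa [support_inv]) with h | h <;> simp [← h]

theorem mul_ne_mul_of_three_le (hk : 3 ≤ k) {t₁ t₂ : Perm α} (ht₁ : t₁ ∈ T) (ht₂ : t₂ ∈ T)
    (hne : t₁ ≠ t₂) (hcomm : t₁ * t₂ ≠ t₂ * t₁) {u v : Perm α} (hu : u ∈ T ∪ T⁻¹)
    (hv : v ∈ T ∪ T⁻¹) (hx : u * t₁ ≠ 1) : u * t₁ ≠ v * t₂ := by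
  intro h
  obtain ⟨huv, hU⟩ := hT.support_ne_and_support_union_eq hcyc ht₁ ht₂ hne hu hv
    (by rw [inv_mul_eq_iff_eq_mul, ← mul_assoc, h, mul_inv_cancel_right])
  have h₁₂ := hT t₁ ht₁ t₂ ht₂ hne
  have h₂₁ := hT t₂ ht₂ t₁ ht₁ hne.symm
  have hk₁ : 3 ≤ #t₁.support := (hcyc t₁ ht₁).2 ▸ hk
  have hk₂ : 3 ≤ #t₂.support := (hcyc t₂ ht₂).2 ▸ hk
  have hv₂ : v ≠ t₂⁻¹ := by
    rintro rfl
    exact hx (h.trans (inv_mul_cancel t₂))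
  have hv' :=
    hT.eq_or_eq_inv_of_support_subset_union hcyc hk ht₁ ht₂ hv (hU ▸ subset_union_right)
  rcases hT.eq_or_eq_inv_of_support_subset_union hcyc hk ht₁ ht₂ hu (hU ▸ subset_union_left)
    with rfl | rfl | rfl | rfl
  · rcases hv' with rfl | rfl | rfl | rfl
    · exact huv rfl
    · exact huv (support_inv _).symm
    · exact hx (mul_self_eq_one_of_mul_self_eq h h₁₂)
    · exact hv₂ rfl
  · exact hx (inv_mul_cancel t₁)
  · rcases hv' with rfl | rfl | rfl | rfl
    · exact hcomm h.symm
    · exact mul_ne_inv_mul (hcyc t₁ ht₁).1 hk₁ h₁₂ subset_rfl h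
    · exact huv rfl
    · exact hv₂ rfl
  · rcases hv' with rfl | rfl | rfl | rfl
    · exact mul_ne_inv_mul (hcyc t₂ ht₂).1 hk₂ h₂₁ subset_rfl h.symm
    · exact mul_ne_inv_mul (hcyc t₁ ht₁).1 hk₁ h₁₂ (support_inv t₂).le h
    · exact huv (support_inv _)
    · exact hv₂ rfl

theorem conj_mem_of_card_eq_two (hk : k = 2) {t₁ t₂ : Perm α} (ht₁ : t₁ ∈ T) (ht₂ : t₂ ∈ T)
    (hne : t₁ ≠ t₂) (hcomm : t₁ * t₂ ≠ t₂ * t₁) {u v : Perm α} (hu : u ∈ T ∪ T⁻¹)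
    (hv : v ∈ T ∪ T⁻¹) (hx : u * t₁ ≠ 1) (h : u * t₁ = v * t₂) :
    t₁ * t₂ * t₁⁻¹ ∈ T ∧ t₂ * t₁ * t₂⁻¹ ∈ T := by
  have hswap : ∀ w ∈ T ∪ T⁻¹, w.IsSwap ∧ w ∈ T := by
    intro w hw
    have hw₂ : w.IsSwap :=
      card_support_eq_two.1 (hk ▸ (isCycle_and_card_support_of_mem_union_inv hcyc hw).2)
    refine ⟨hw₂, ?_⟩
    rcases hw with hw | hw
    exacts [hw, hw₂.inv_eq ▸ hw]
  obtain ⟨-, hU⟩ := hT.support_ne_and_support_union_eq hcyc ht₁ ht₂ hne hu hv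
    (by rw [inv_mul_eq_iff_eq_mul, ← mul_assoc, h, mul_inv_cancel_right])
  obtain ⟨p, hp⟩ : (t₁.support ∩ t₂.support).Nonempty := by
    rw [nonempty_iff_ne_empty]
    intro h₀
    exact hcomm (disjoint_iff_disjoint_support.2 (disjoint_iff_inter_eq_empty.2 h₀)).commute.eq
  obtain ⟨q₁, hq₁, rfl⟩ :=
    (hswap t₁ (Or.inl ht₁)).1.exists_eq_swap_of_mem_support (mem_inter.1 hp).1
  obtain ⟨q₂, hq₂, rfl⟩ :=
    (hswap t₂ (Or.inl ht₂)).1.exists_eq_swap_of_mem_support (mem_inter.1 hp).2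
  have hq : q₁ ≠ q₂ := by
    rintro rfl
    exact hne rfl
  have hpq : (swap p q₁).support ∪ (swap p q₂).support = {p, q₁, q₂} := by
    rw [support_swap hq₁.symm, support_swap hq₂.symm]
    ext
    simp only [mem_union, mem_insert, mem_singleton]
    tauto
  have hc₁ : swap p q₁ * swap p q₂ * (swap p q₁)⁻¹ = swap q₁ q₂ := by
    rw [← swap_apply_apply, swap_apply_left, swap_apply_of_ne_of_ne hq₂ hq.symm]
  have hc₂ : swap p q₂ * swap p q₁ * (swap p q₂)⁻¹ = swap q₁ q₂ := by
    rw [← swap_apply_apply, swap_apply_left, swap_apply_of_ne_of_ne hq₁ hq, swap_comm]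
  rw [hc₁, hc₂, and_self]
  rw [hpq] at hU
  rcases (hswap u hu).1.eq_swap_of_support_subset (hU ▸ subset_union_left) with rfl | rfl | rfl
  · exact absurd (swap_mul_self p q₁) hx
  · rcases (hswap v hv).1.eq_swap_of_support_subset (hU ▸ subset_union_right)
      with rfl | rfl | rfl
    · exact absurd h.symm hcomm
    · exact absurd (h.trans (swap_mul_self p q₂)) hx
    · exact (hswap _ hv).2
  · exact (hswap _ hu).2

theorem conj_mem_of_not_commute {t₁ t₂ : Perm α} (ht₁ : t₁ ∈ T) (ht₂ : t₂ ∈ T)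
    (hne : t₁ ≠ t₂) (hcomm : t₁ * t₂ ≠ t₂ * t₁) {x : Perm α}
    (hx : x ≠ 1 ∧ (cayleyGraph (Perm α) T).Adj t₁ x ∧ (cayleyGraph (Perm α) T).Adj t₂ x) :
    t₁ * t₂ * t₁⁻¹ ∈ T ∧ t₂ * t₁ * t₂⁻¹ ∈ T := by
  obtain ⟨hx₁, hadj₁, hadj₂⟩ := hx
  have hu := (cayleyGraph_adj_iff.1 hadj₁).2
  have hv := (cayleyGraph_adj_iff.1 hadj₂).2
  have hx' : x * t₁⁻¹ * t₁ ≠ 1 := by rwa [inv_mul_cancel_right]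
  have h : x * t₁⁻¹ * t₁ = x * t₂⁻¹ * t₂ := by simp only [inv_mul_cancel_right]
  have hk : 2 ≤ k := (hcyc t₁ ht₁).2 ▸ (hcyc t₁ ht₁).1.two_le_card_support
  rcases hk.eq_or_lt with hk | hk
  · exact hT.conj_mem_of_card_eq_two hcyc hk.symm ht₁ ht₂ hne hcomm hu hv hx' h
  · exact absurd h (hT.mul_ne_mul_of_three_le hcyc hk ht₁ ht₂ hne hcomm hu hv hx')

theorem adj_and_adj_iff_of_commute {t₁ t₂ : Perm α} (ht₁ : t₁ ∈ T) (ht₂ : t₂ ∈ T)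
    (hne : t₁ ≠ t₂) (hcomm : t₁ * t₂ = t₂ * t₁) (x : Perm α) :
    (x ≠ 1 ∧ (cayleyGraph (Perm α) T).Adj t₁ x ∧ (cayleyGraph (Perm α) T).Adj t₂ x) ↔
      x = t₁ * t₂ := by
  have hd : t₁.Disjoint t₂ :=
    disjoint_of_commute_of_card_support_inter_le_one hcomm (hT t₁ ht₁ t₂ ht₂ hne)
  refine ⟨fun ⟨hx, hadj₁, hadj₂⟩ => ?_, ?_⟩
  · set u := x * t₁⁻¹
    set v := x * t₂⁻¹
    have hu := (cayleyGraph_adj_iff.1 hadj₁).2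
    have hv := (cayleyGraph_adj_iff.1 hadj₂).2
    obtain ⟨hu_cyc, hu_card⟩ := isCycle_and_card_support_of_mem_union_inv hcyc hu
    have h : u⁻¹ * v = t₁ * t₂⁻¹ := by simp [u, v, mul_assoc]
    obtain ⟨-, hU⟩ := hT.support_ne_and_support_union_eq hcyc ht₁ ht₂ hne hu hv h
    have hduv : u⁻¹.Disjoint v := by
      have hcard := card_union_add_card_inter u.support v.support
      rw [hU, card_union_of_disjoint (disjoint_iff_disjoint_support.1 hd), (hcyc t₁ ht₁).2,
        (hcyc t₂ ht₂).2, hu_card, (isCycle_and_card_support_of_mem_union_inv hcyc hv).2] at hcard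
      rw [disjoint_iff_disjoint_support, support_inv, disjoint_iff_inter_eq_empty, ← card_eq_zero]
      omega
    rcases hu_cyc.inv.eq_or_eq_of_mul_eq_mul hduv (hcyc t₁ ht₁).1 (hcyc t₂ ht₂).1.inv
      hd.inv_right h with h₁ | h₂
    · exact absurd (by simpa [u] using h₁) hx
    · rw [inv_inj, mul_inv_eq_iff_eq_mul] at h₂
      rw [h₂, hcomm]
  · rintro rfl
    exact hT.adj_mul_and_adj_mul hcyc ht₁ ht₂ hne (by rwa [hcomm, mul_inv_cancel_right])

end IsSplit

theorem stmt_16_general (n k : ℕ) (T : Set (Equiv.Perm (Fin n)))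
    (hcyc : ∀ t ∈ T, t.IsCycle ∧ t.support.card = k)
    (hsplit : ∀ g ∈ T, ∀ h ∈ T, g ≠ h → (g.support ∩ h.support).card ≤ 1)
    (t₁ t₂ : Equiv.Perm (Fin n)) (ht₁ : t₁ ∈ T) (ht₂ : t₂ ∈ T) (hne : t₁ ≠ t₂) :
    ((∃! x : Equiv.Perm (Fin n), x ≠ 1 ∧
        (cayleyGraph (Equiv.Perm (Fin n)) T).Adj t₁ x ∧
        (cayleyGraph (Equiv.Perm (Fin n)) T).Adj t₂ x) ↔ t₁ * t₂ = t₂ * t₁) ∧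
    (t₁ * t₂ = t₂ * t₁ → ∀ x : Equiv.Perm (Fin n),
      (x ≠ 1 ∧ (cayleyGraph (Equiv.Perm (Fin n)) T).Adj t₁ x ∧
        (cayleyGraph (Equiv.Perm (Fin n)) T).Adj t₂ x) ↔ x = t₁ * t₂) := by
  have hcommon := IsSplit.adj_and_adj_iff_of_commute hcyc hsplit ht₁ ht₂ hne
  refine ⟨⟨fun hex => ?_, fun hcomm => ⟨t₁ * t₂, (hcommon hcomm _).2 rfl,
    fun y hy => (hcommon hcomm y).1 hy⟩⟩, hcommon⟩
  by_contra hcomm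
  obtain ⟨x, hx, huniq⟩ := hex
  obtain ⟨h₁₂, h₂₁⟩ := IsSplit.conj_mem_of_not_commute hcyc hsplit ht₁ ht₂ hne hcomm hx
  have hx₁₂ := huniq _ (IsSplit.adj_mul_and_adj_mul hcyc hsplit ht₁ ht₂ hne h₁₂)
  obtain ⟨hx₂₁, hadj₂, hadj₁⟩ := IsSplit.adj_mul_and_adj_mul hcyc hsplit ht₂ ht₁ hne.symm h₂₁
  exact hcomm (hx₁₂.trans (huniq _ ⟨hx₂₁, hadj₁, hadj₂⟩).symm)

/-- Let `T ⊆ S_n` be a split set of `k`-cycles and `t₁ ≠ t₂` in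
`T`. In `Cay(S_n, T)` there is a unique vertex `x ≠ 1` adjacent to both `t₁`
and `t₂` (a unique 4-cycle through the path `t₂ → 1 → t₁`) iff `t₁t₂ = t₂t₁`;
moreover when `t₁` and `t₂` commute this unique common neighbor is `t₁t₂`,
giving the 4-cycle `1 → t₁ → t₁t₂ → t₂ → 1`. -/
theorem stmt_16 (n k : ℕ) (hk : 2 ≤ k) (T : Set (Equiv.Perm (Fin n)))
    (hcyc : ∀ t ∈ T, t.IsCycle ∧ t.support.card = k)
    (hsplit : ∀ g ∈ T, ∀ h ∈ T, g ≠ h → (g.support ∩ h.support).card ≤ 1)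
    (t₁ t₂ : Equiv.Perm (Fin n)) (ht₁ : t₁ ∈ T) (ht₂ : t₂ ∈ T) (hne : t₁ ≠ t₂) :
    ((∃! x : Equiv.Perm (Fin n), x ≠ 1 ∧
        (cayleyGraph (Equiv.Perm (Fin n)) T).Adj t₁ x ∧
        (cayleyGraph (Equiv.Perm (Fin n)) T).Adj t₂ x) ↔ t₁ * t₂ = t₂ * t₁) ∧
    (t₁ * t₂ = t₂ * t₁ → ∀ x : Equiv.Perm (Fin n),
      (x ≠ 1 ∧ (cayleyGraph (Equiv.Perm (Fin n)) T).Adj t₁ x ∧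
        (cayleyGraph (Equiv.Perm (Fin n)) T).Adj t₂ x) ↔ x = t₁ * t₂) :=
  stmt_16_general n k T hcyc hsplit t₁ t₂ ht₁ ht₂ hne
end
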